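/- arXiv:1111.7255 — 10 statements merged into one kernel-verified Lean document; each statement's English description precedes it below -/
import Mathlib

section
/- Let u : ℝ² → ℝ be a smooth function of (x,y) satisfying u_xy = √(u_x² + 1)·√(u_y² + 1) at every point. Define v = ln[(u_x + √(u_x² + 1))·(u_y + √(u_y² + 1))]. Then v satisfies the sine-Gordon equation in exponential form: v_xy = (1/2)(exp(v) − exp(−v)) at every point. -/
open Real

/-- Partial derivative with respect to the first variable. -/
noncomputable def px (u : ℝ → ℝ → ℝ) : ℝ → ℝ → ℝ := fun x y => deriv (fun x' => u x' y) x

/-- Partial derivative with respect to the second variable. -/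
noncomputable def py (u : ℝ → ℝ → ℝ) : ℝ → ℝ → ℝ := fun x y => deriv (fun y' => u x y') y

noncomputable def sgD1 (g : ℝ × ℝ → ℝ) : ℝ × ℝ → ℝ := fun p => fderiv ℝ g p (1, 0)
noncomputable def sgD2 (g : ℝ × ℝ → ℝ) : ℝ × ℝ → ℝ := fun p => fderiv ℝ g p (0, 1)

lemma sg_hasDerivAt_fst {g : ℝ × ℝ → ℝ} (hg : ContDiff ℝ (⊤ : ℕ∞) g) (x y : ℝ) :
    HasDerivAt (fun x' => g (x', y)) (sgD1 g (x, y)) x := by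
  have h := (hg.differentiable (by simp) (x, y)).hasFDerivAt
  have h2 : HasDerivAt (fun x' : ℝ => ((x', y) : ℝ × ℝ)) ((1 : ℝ), (0 : ℝ)) x :=
    (hasDerivAt_id x).prodMk (hasDerivAt_const x y)
  exact h.comp_hasDerivAt x h2

lemma sg_hasDerivAt_snd {g : ℝ × ℝ → ℝ} (hg : ContDiff ℝ (⊤ : ℕ∞) g) (x y : ℝ) :
    HasDerivAt (fun y' => g (x, y')) (sgD2 g (x, y)) y := by
  have h := (hg.differentiable (by simp) (x, y)).hasFDerivAt
  have h2 : HasDerivAt (fun y' : ℝ => ((x, y') : ℝ × ℝ)) ((0 : ℝ), (1 : ℝ)) y :=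
    (hasDerivAt_const y x).prodMk (hasDerivAt_id y)
  exact h.comp_hasDerivAt y h2

lemma sg_smooth_dapp {g : ℝ × ℝ → ℝ} (hg : ContDiff ℝ (⊤ : ℕ∞) g) (w : ℝ × ℝ) :
    ContDiff ℝ (⊤ : ℕ∞) (fun p => fderiv ℝ g p w) :=
  (hg.fderiv_right (m := (⊤ : ℕ∞)) (by simp)).clm_apply contDiff_const

lemma sg_smooth_D1 {g : ℝ × ℝ → ℝ} (hg : ContDiff ℝ (⊤ : ℕ∞) g) :
    ContDiff ℝ (⊤ : ℕ∞) (sgD1 g) := sg_smooth_dapp hg _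

lemma sg_smooth_D2 {g : ℝ × ℝ → ℝ} (hg : ContDiff ℝ (⊤ : ℕ∞) g) :
    ContDiff ℝ (⊤ : ℕ∞) (sgD2 g) := sg_smooth_dapp hg _

lemma sg_clairaut {g : ℝ × ℝ → ℝ} (hg : ContDiff ℝ (⊤ : ℕ∞) g) (q w w' : ℝ × ℝ) :
    fderiv ℝ (fun p => fderiv ℝ g p w) q w' = fderiv ℝ (fun p => fderiv ℝ g p w') q w := by
  have hd : DifferentiableAt ℝ (fderiv ℝ g) q :=
    (hg.fderiv_right (m := (⊤ : ℕ∞)) (by simp)).differentiable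
      (by simp) q
  have key : ∀ a b : ℝ × ℝ,
      fderiv ℝ (fun p => fderiv ℝ g p a) q b = fderiv ℝ (fderiv ℝ g) q b a := by
    intro a b
    have hc := ((ContinuousLinearMap.apply ℝ ℝ a).hasFDerivAt.comp q hd.hasFDerivAt).fderiv
    have he : (fun p => fderiv ℝ g p a) =
        (ContinuousLinearMap.apply ℝ ℝ a) ∘ (fderiv ℝ g) := rfl
    rw [he, hc]
    rfl
  rw [key, key]
  exact (hg.contDiffAt.isSymmSndFDerivAt (by simp only [minSmoothness_of_isRCLikeNormedField]; exact WithTop.coe_le_coe.2 le_top)) w' w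

lemma sg_clairaut' {g : ℝ × ℝ → ℝ} (hg : ContDiff ℝ (⊤ : ℕ∞) g) (q : ℝ × ℝ) :
    sgD2 (sgD1 g) q = sgD1 (sgD2 g) q :=
  sg_clairaut hg q (1, 0) (0, 1)

lemma sg_sqrt_pos (t : ℝ) : 0 < Real.sqrt (t ^ 2 + 1) :=
  Real.sqrt_pos.2 (by positivity)

lemma sg_add_sqrt_pos (t : ℝ) : 0 < t + Real.sqrt (t ^ 2 + 1) := by
  have h1 : |t| < Real.sqrt (t ^ 2 + 1) := by
    rw [← Real.sqrt_sq_eq_abs]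
    exact Real.sqrt_lt_sqrt (sq_nonneg t) (by linarith)
  have h2 := neg_abs_le t
  linarith

theorem stmt_0 (u v : ℝ → ℝ → ℝ)
    (hu : ContDiff ℝ (⊤ : ℕ∞) (fun p : ℝ × ℝ => u p.1 p.2))
    (heq : ∀ x y, px (py u) x y =
      Real.sqrt ((px u x y) ^ 2 + 1) * Real.sqrt ((py u x y) ^ 2 + 1))
    (hv : ∀ x y, v x y =
      Real.log ((px u x y + Real.sqrt ((px u x y) ^ 2 + 1)) *
        (py u x y + Real.sqrt ((py u x y) ^ 2 + 1)))) :
    ∀ x y, px (py v) x y = (1 / 2) * (Real.exp (v x y) - Real.exp (-(v x y))) := by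
  have hf : ContDiff ℝ (⊤ : ℕ∞) (fun p : ℝ × ℝ => u p.1 p.2) := hu.of_le (by simp)
  set f : ℝ × ℝ → ℝ := fun p : ℝ × ℝ => u p.1 p.2 with hfdef
  have hW1 : ContDiff ℝ (⊤ : ℕ∞) (sgD1 f) := sg_smooth_D1 hf
  have hW2 : ContDiff ℝ (⊤ : ℕ∞) (sgD2 f) := sg_smooth_D2 hf
  have hW21 : ContDiff ℝ (⊤ : ℕ∞) (sgD1 (sgD2 f)) := sg_smooth_D1 hW2
  have hW22 : ContDiff ℝ (⊤ : ℕ∞) (sgD2 (sgD2 f)) := sg_smooth_D2 hW2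
  have hpx : ∀ X Y, px u X Y = sgD1 f (X, Y) := fun X Y => (sg_hasDerivAt_fst hf X Y).deriv
  have hpy : ∀ X Y, py u X Y = sgD2 f (X, Y) := fun X Y => (sg_hasDerivAt_snd hf X Y).deriv
  have hpxpy : ∀ X Y, px (py u) X Y = sgD1 (sgD2 f) (X, Y) := by
    intro X Y
    show deriv (fun x' => py u x' Y) X = _
    have hfun : (fun x' => py u x' Y) = fun x' => sgD2 f (x', Y) :=
      funext fun x' => hpy x' Y
    rw [hfun]
    exact (sg_hasDerivAt_fst hW2 X Y).deriv
  -- the PDE in terms of sgD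
  have hxy : ∀ p : ℝ × ℝ, sgD1 (sgD2 f) p =
      Real.sqrt (sgD1 f p ^ 2 + 1) * Real.sqrt (sgD2 f p ^ 2 + 1) := by
    intro p
    have h2 := heq p.1 p.2
    rw [hpxpy, hpx, hpy] at h2
    simpa using h2
  -- v in terms of arsinh
  have hv' : ∀ X Y, v X Y = arsinh (sgD1 f (X, Y)) + arsinh (sgD2 f (X, Y)) := by
    intro X Y
    rw [hv X Y, hpx, hpy,
      Real.log_mul (sg_add_sqrt_pos _).ne' (sg_add_sqrt_pos _).ne']
    simp only [Real.arsinh]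
    rw [add_comm (1 : ℝ) (sgD1 f (X, Y) ^ 2), add_comm (1 : ℝ) (sgD2 f (X, Y) ^ 2)]
  -- first derivative of v in y
  have hQ : ∀ X Y, py v X Y = Real.sqrt (sgD2 f (X, Y) ^ 2 + 1) +
      sgD2 (sgD2 f) (X, Y) / Real.sqrt (sgD2 f (X, Y) ^ 2 + 1) := by
    intro X Y
    have hva : (fun y' => v X y') =
        fun y' => arsinh (sgD1 f (X, y')) + arsinh (sgD2 f (X, y')) :=
      funext fun y' => hv' X y'
    have h1 : HasDerivAt (fun y' => sgD1 f (X, y')) (sgD2 (sgD1 f) (X, Y)) Y :=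
      sg_hasDerivAt_snd hW1 X Y
    have h2 : HasDerivAt (fun y' => sgD2 f (X, y')) (sgD2 (sgD2 f) (X, Y)) Y :=
      sg_hasDerivAt_snd hW2 X Y
    have ha1 : HasDerivAt (fun y' => arsinh (sgD1 f (X, y')))
        ((Real.sqrt (1 + sgD1 f (X, Y) ^ 2))⁻¹ * sgD2 (sgD1 f) (X, Y)) Y :=
      (Real.hasDerivAt_arsinh _).comp Y h1
    have ha2 : HasDerivAt (fun y' => arsinh (sgD2 f (X, y')))
        ((Real.sqrt (1 + sgD2 f (X, Y) ^ 2))⁻¹ * sgD2 (sgD2 f) (X, Y)) Y :=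
      (Real.hasDerivAt_arsinh _).comp Y h2
    have hd : py v X Y = (Real.sqrt (1 + sgD1 f (X, Y) ^ 2))⁻¹ * sgD2 (sgD1 f) (X, Y)
        + (Real.sqrt (1 + sgD2 f (X, Y) ^ 2))⁻¹ * sgD2 (sgD2 f) (X, Y) := by
      show deriv (fun y' => v X y') Y = _
      rw [hva]
      exact (ha1.add ha2).deriv
    rw [hd, sg_clairaut' hf, hxy,
      add_comm (1 : ℝ) (sgD1 f (X, Y) ^ 2), add_comm (1 : ℝ) (sgD2 f (X, Y) ^ 2)]
    have hA := sg_sqrt_pos (sgD1 f (X, Y))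
    have hB := sg_sqrt_pos (sgD2 f (X, Y))
    field_simp
  -- now the main computation at a point
  intro x y
  have hA : (0:ℝ) < Real.sqrt (sgD1 f (x, y) ^ 2 + 1) := sg_sqrt_pos _
  have hB : (0:ℝ) < Real.sqrt (sgD2 f (x, y) ^ 2 + 1) := sg_sqrt_pos _
  -- derivative of b := sgD2 f along x
  have h_b : HasDerivAt (fun x' => sgD2 f (x', y)) (sgD1 (sgD2 f) (x, y)) x :=
    sg_hasDerivAt_fst hW2 x y
  have h_bsq : HasDerivAt (fun x' => sgD2 f (x', y) ^ 2 + 1)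
      (2 * sgD2 f (x, y) * sgD1 (sgD2 f) (x, y)) x := by
    simpa using (h_b.pow 2).add_const 1
  have hBsqrt : HasDerivAt (fun x' => Real.sqrt (sgD2 f (x', y) ^ 2 + 1))
      ((2 * sgD2 f (x, y) * sgD1 (sgD2 f) (x, y)) /
        (2 * Real.sqrt (sgD2 f (x, y) ^ 2 + 1))) x :=
    h_bsq.sqrt (by positivity)
  have h_c : HasDerivAt (fun x' => sgD2 (sgD2 f) (x', y)) (sgD1 (sgD2 (sgD2 f)) (x, y)) x :=
    sg_hasDerivAt_fst hW22 x y
  have h_div := h_c.div hBsqrt hB.ne'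
  have h_total := hBsqrt.add h_div
  have hlhs : px (py v) x y =
      (2 * sgD2 f (x, y) * sgD1 (sgD2 f) (x, y)) /
        (2 * Real.sqrt (sgD2 f (x, y) ^ 2 + 1)) +
      (sgD1 (sgD2 (sgD2 f)) (x, y) * Real.sqrt (sgD2 f (x, y) ^ 2 + 1) -
        sgD2 (sgD2 f) (x, y) *
          ((2 * sgD2 f (x, y) * sgD1 (sgD2 f) (x, y)) /
            (2 * Real.sqrt (sgD2 f (x, y) ^ 2 + 1)))) /
        Real.sqrt (sgD2 f (x, y) ^ 2 + 1) ^ 2 := by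
    show deriv (fun x' => py v x' y) x = _
    have hfun : (fun x' => py v x' y) = fun x' => Real.sqrt (sgD2 f (x', y) ^ 2 + 1) +
        sgD2 (sgD2 f) (x', y) / Real.sqrt (sgD2 f (x', y) ^ 2 + 1) :=
      funext fun x' => hQ x' y
    rw [hfun]
    exact h_total.deriv
  -- third derivative: sgD1 (sgD2 (sgD2 f)) via differentiating the PDE in y
  have h_ay : HasDerivAt (fun y' => sgD1 f (x, y')) (sgD2 (sgD1 f) (x, y)) y :=
    sg_hasDerivAt_snd hW1 x y
  have h_by : HasDerivAt (fun y' => sgD2 f (x, y')) (sgD2 (sgD2 f) (x, y)) y :=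
    sg_hasDerivAt_snd hW2 x y
  have h_Ay : HasDerivAt (fun y' => Real.sqrt (sgD1 f (x, y') ^ 2 + 1))
      ((2 * sgD1 f (x, y) * sgD2 (sgD1 f) (x, y)) /
        (2 * Real.sqrt (sgD1 f (x, y) ^ 2 + 1))) y := by
    have := ((h_ay.pow 2).add_const 1)
    have h' : HasDerivAt (fun y' => sgD1 f (x, y') ^ 2 + 1)
        (2 * sgD1 f (x, y) * sgD2 (sgD1 f) (x, y)) y := by simpa using this
    exact h'.sqrt (by positivity)
  have h_By : HasDerivAt (fun y' => Real.sqrt (sgD2 f (x, y') ^ 2 + 1))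
      ((2 * sgD2 f (x, y) * sgD2 (sgD2 f) (x, y)) /
        (2 * Real.sqrt (sgD2 f (x, y) ^ 2 + 1))) y := by
    have h' : HasDerivAt (fun y' => sgD2 f (x, y') ^ 2 + 1)
        (2 * sgD2 f (x, y) * sgD2 (sgD2 f) (x, y)) y := by
      simpa using ((h_by.pow 2).add_const 1)
    exact h'.sqrt (by positivity)
  have h_prod := h_Ay.mul h_By
  have h_cd : HasDerivAt (fun y' => sgD1 (sgD2 f) (x, y')) (sgD2 (sgD1 (sgD2 f)) (x, y)) y :=
    sg_hasDerivAt_snd hW21 x y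
  have hfun2 : (fun y' => sgD1 (sgD2 f) (x, y')) = fun y' =>
      Real.sqrt (sgD1 f (x, y') ^ 2 + 1) * Real.sqrt (sgD2 f (x, y') ^ 2 + 1) :=
    funext fun y' => hxy (x, y')
  rw [hfun2] at h_cd
  have h_third : sgD1 (sgD2 (sgD2 f)) (x, y) =
      (2 * sgD1 f (x, y) * sgD2 (sgD1 f) (x, y)) /
        (2 * Real.sqrt (sgD1 f (x, y) ^ 2 + 1)) * Real.sqrt (sgD2 f (x, y) ^ 2 + 1) +
      Real.sqrt (sgD1 f (x, y) ^ 2 + 1) *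
        ((2 * sgD2 f (x, y) * sgD2 (sgD2 f) (x, y)) /
          (2 * Real.sqrt (sgD2 f (x, y) ^ 2 + 1))) := by
    have e1 : sgD1 (sgD2 (sgD2 f)) (x, y) = sgD2 (sgD1 (sgD2 f)) (x, y) :=
      sg_clairaut hW2 (x, y) (0, 1) (1, 0)
    rw [e1]
    exact h_cd.unique h_prod
  -- the mixed second derivative sgD2 (sgD1 f) equals sgD1 (sgD2 f) = A * B
  have h_mixed : sgD2 (sgD1 f) (x, y) =
      Real.sqrt (sgD1 f (x, y) ^ 2 + 1) * Real.sqrt (sgD2 f (x, y) ^ 2 + 1) := by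
    rw [sg_clairaut' hf]; exact hxy (x, y)
  -- exponentials
  have hA2 : Real.sqrt (sgD1 f (x, y) ^ 2 + 1) ^ 2 = sgD1 f (x, y) ^ 2 + 1 :=
    Real.sq_sqrt (by positivity)
  have hB2 : Real.sqrt (sgD2 f (x, y) ^ 2 + 1) ^ 2 = sgD2 f (x, y) ^ 2 + 1 :=
    Real.sq_sqrt (by positivity)
  have hexp : Real.exp (v x y) =
      (sgD1 f (x, y) + Real.sqrt (sgD1 f (x, y) ^ 2 + 1)) *
      (sgD2 f (x, y) + Real.sqrt (sgD2 f (x, y) ^ 2 + 1)) := by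
    rw [hv x y, hpx, hpy]
    exact Real.exp_log (mul_pos (sg_add_sqrt_pos _) (sg_add_sqrt_pos _))
  have hexpneg : Real.exp (-(v x y)) =
      (Real.sqrt (sgD1 f (x, y) ^ 2 + 1) - sgD1 f (x, y)) *
      (Real.sqrt (sgD2 f (x, y) ^ 2 + 1) - sgD2 f (x, y)) := by
    rw [Real.exp_neg, hexp]
    refine inv_eq_of_mul_eq_one_right ?_
    nlinarith [hA2, hB2]
  -- finish
  rw [hlhs, h_third, hexp, hexpneg, h_mixed, hxy (x, y)]
  field_simp
  ring
end

section
/- Let u : ℝ² → ℝ be a smooth function of (x,y) with |u_x| < 1 and |u_y| < 1 everywhere, satisfying u_xy = √(1 − u_x²)·√(1 − u_y²) at every point. Define v = arcsin(u_x) + arcsin(u_y). Then v satisfies the sine-Gordon equation v_xy = − sin(v) at every point. -/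
open Real

section Helpers

variable {F : Type*} [NormedAddCommGroup F] [NormedSpace ℝ F]

private lemma sliceX {W : ℝ × ℝ → F} (hW : Differentiable ℝ W) (x y : ℝ) :
    HasDerivAt (fun x' => W (x', y)) (fderiv ℝ W (x, y) (1, 0)) x := by
  have h := (hW (x, y)).hasFDerivAt.comp_hasDerivAt x
    ((hasDerivAt_id x).prodMk (hasDerivAt_const x y))
  simpa [Function.comp_def] using h

private lemma sliceY {W : ℝ × ℝ → F} (hW : Differentiable ℝ W) (x y : ℝ) :
    HasDerivAt (fun y' => W (x, y')) (fderiv ℝ W (x, y) (0, 1)) y := by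
  have h := (hW (x, y)).hasFDerivAt.comp_hasDerivAt y
    ((hasDerivAt_const y x).prodMk (hasDerivAt_id y))
  simpa [Function.comp_def] using h

private lemma mixedsym {W : ℝ × ℝ → ℝ} (hW : ContDiff ℝ (⊤ : ℕ∞) W) (x y : ℝ) :
    deriv (fun x' => deriv (fun y' => W (x', y')) y) x
      = deriv (fun y' => deriv (fun x' => W (x', y')) x) y := by
  have hdW : Differentiable ℝ W := hW.differentiable (by simp)
  have hF : ContDiff ℝ (⊤ : ℕ∞) (fderiv ℝ W) := hW.fderiv_right (by simp)
  have hdF : Differentiable ℝ (fderiv ℝ W) := hF.differentiable (by simp)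
  have hsym := second_derivative_symmetric (fun p => (hdW p).hasFDerivAt)
      (hdF (x, y)).hasFDerivAt ((1:ℝ), (0:ℝ)) ((0:ℝ), (1:ℝ))
  have hL : deriv (fun x' => deriv (fun y' => W (x', y')) y) x
      = fderiv ℝ (fderiv ℝ W) (x, y) (1, 0) (0, 1) := by
    have e : (fun x' => deriv (fun y' => W (x', y')) y)
        = fun x' => fderiv ℝ W (x', y) (0, 1) := by
      funext x'; exact (sliceY hdW x' y).deriv
    rw [e]
    have h1 : HasFDerivAt (fun p => fderiv ℝ W p ((0:ℝ), (1:ℝ)))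
        ((ContinuousLinearMap.apply ℝ ℝ ((0:ℝ), (1:ℝ))).comp
          (fderiv ℝ (fderiv ℝ W) (x, y))) (x, y) :=
      (ContinuousLinearMap.apply ℝ ℝ ((0:ℝ), (1:ℝ))).hasFDerivAt.comp (x, y)
        (hdF (x, y)).hasFDerivAt
    have h2 := h1.comp_hasDerivAt x ((hasDerivAt_id x).prodMk (hasDerivAt_const x y))
    have h3 : HasDerivAt (fun x' => fderiv ℝ W (x', y) ((0:ℝ), (1:ℝ)))
        (fderiv ℝ (fderiv ℝ W) (x, y) (1, 0) (0, 1)) x := by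
      simpa [Function.comp_def] using h2
    exact h3.deriv
  have hR : deriv (fun y' => deriv (fun x' => W (x', y')) x) y
      = fderiv ℝ (fderiv ℝ W) (x, y) (0, 1) (1, 0) := by
    have e : (fun y' => deriv (fun x' => W (x', y')) x)
        = fun y' => fderiv ℝ W (x, y') (1, 0) := by
      funext y'; exact (sliceX hdW x y').deriv
    rw [e]
    have h1 : HasFDerivAt (fun p => fderiv ℝ W p ((1:ℝ), (0:ℝ)))
        ((ContinuousLinearMap.apply ℝ ℝ ((1:ℝ), (0:ℝ))).comp
          (fderiv ℝ (fderiv ℝ W) (x, y))) (x, y) :=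
      (ContinuousLinearMap.apply ℝ ℝ ((1:ℝ), (0:ℝ))).hasFDerivAt.comp (x, y)
        (hdF (x, y)).hasFDerivAt
    have h2 := h1.comp_hasDerivAt y ((hasDerivAt_const y x).prodMk (hasDerivAt_id y))
    have h3 : HasDerivAt (fun y' => fderiv ℝ W (x, y') ((1:ℝ), (0:ℝ)))
        (fderiv ℝ (fderiv ℝ W) (x, y) (0, 1) (1, 0)) y := by
      simpa [Function.comp_def] using h2
    exact h3.deriv
  rw [hL, hR, hsym]

end Helpers

theorem stmt_1 (u v : ℝ → ℝ → ℝ)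
    (hu : ContDiff ℝ (⊤ : ℕ∞) (fun p : ℝ × ℝ => u p.1 p.2))
    (hux : ∀ x y, |px u x y| < 1)
    (huy : ∀ x y, |py u x y| < 1)
    (heq : ∀ x y, px (py u) x y =
      Real.sqrt (1 - (px u x y) ^ 2) * Real.sqrt (1 - (py u x y) ^ 2))
    (hv : ∀ x y, v x y = Real.arcsin (px u x y) + Real.arcsin (py u x y)) :
    ∀ x y, px (py v) x y = -Real.sin (v x y) := by
  have sqrt_pos' : ∀ t : ℝ, |t| < 1 → 0 < Real.sqrt (1 - t ^ 2) := by
    intro t ht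
    have h := abs_lt.1 ht
    exact Real.sqrt_pos.2 (by nlinarith [h.1, h.2])
  have hU : ContDiff ℝ (⊤ : ℕ∞) (fun p : ℝ × ℝ => u p.1 p.2) := hu
  set U : ℝ × ℝ → ℝ := fun p => u p.1 p.2 with hUdef
  have hdU : Differentiable ℝ U := hU.differentiable (by simp)
  have hFU : ContDiff ℝ (⊤ : ℕ∞) (fderiv ℝ U) := hU.fderiv_right (by simp)
  set f2 : ℝ × ℝ → ℝ := fun p => fderiv ℝ U p (1, 0) with hf2def
  set g2 : ℝ × ℝ → ℝ := fun p => fderiv ℝ U p (0, 1) with hg2def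
  have hf2 : ContDiff ℝ (⊤ : ℕ∞) f2 := hFU.clm_apply contDiff_const
  have hg2 : ContDiff ℝ (⊤ : ℕ∞) g2 := hFU.clm_apply contDiff_const
  have hdf2 : Differentiable ℝ f2 := hf2.differentiable (by simp)
  have hdg2 : Differentiable ℝ g2 := hg2.differentiable (by simp)
  have hpx : ∀ a b : ℝ, px u a b = f2 (a, b) := fun a b => (sliceX hdU a b).deriv
  have hpy : ∀ a b : ℝ, py u a b = g2 (a, b) := fun a b => (sliceY hdU a b).deriv
  have hbf : ∀ a b : ℝ, |f2 (a, b)| < 1 := fun a b => hpx a b ▸ hux a b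
  have hbg : ∀ a b : ℝ, |g2 (a, b)| < 1 := fun a b => hpy a b ▸ huy a b
  have hsf : ∀ a b : ℝ, 0 < Real.sqrt (1 - f2 (a, b) ^ 2) := fun a b =>
    sqrt_pos' _ (hbf a b)
  have hsg : ∀ a b : ℝ, 0 < Real.sqrt (1 - g2 (a, b) ^ 2) := fun a b =>
    sqrt_pos' _ (hbg a b)
  -- heq in terms of f2, g2 : the x-derivative of g2 along the first variable
  have hXg : ∀ a b : ℝ, fderiv ℝ g2 (a, b) (1, 0)
      = Real.sqrt (1 - f2 (a, b) ^ 2) * Real.sqrt (1 - g2 (a, b) ^ 2) := by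
    intro a b
    have h1 : px (py u) a b = fderiv ℝ g2 (a, b) (1, 0) := by
      have e : (fun x' => py u x' b) = fun x' => g2 (x', b) := by
        funext x'; exact hpy x' b
      show deriv (fun x' => py u x' b) a = _
      rw [e]; exact (sliceX hdg2 a b).deriv
    rw [← h1, heq a b, hpx a b, hpy a b]
  -- Clairaut for u : y-derivative of f2 equals x-derivative of g2
  have hYf : ∀ a b : ℝ, fderiv ℝ f2 (a, b) (0, 1)
      = Real.sqrt (1 - f2 (a, b) ^ 2) * Real.sqrt (1 - g2 (a, b) ^ 2) := by
    intro a b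
    have h1 : fderiv ℝ f2 (a, b) (0, 1) = deriv (fun y' => f2 (a, y')) b :=
      (sliceY hdf2 a b).deriv.symm
    have e1 : (fun y' => f2 (a, y')) = fun y' => deriv (fun x' => u x' y') a := by
      funext y'; exact (hpx a y').symm
    have e2 : (fun x' => deriv (fun y' => u x' y') b) = fun x' => g2 (x', b) := by
      funext x'; exact hpy x' b
    have hmix := mixedsym (W := U) hU a b
    rw [h1, e1, ← hmix, e2, (sliceX hdg2 a b).deriv, hXg a b]
  -- B = arcsin ∘ g2 is smooth
  have hB : ContDiff ℝ (⊤ : ℕ∞) (fun p : ℝ × ℝ => Real.arcsin (g2 p)) := by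
    apply contDiff_iff_contDiffAt.2
    intro p
    have h := abs_lt.1 (hbg p.1 p.2)
    have h1 : g2 p ≠ -1 := by
      have : g2 (p.1, p.2) = g2 p := by rw [Prod.mk.eta]
      rw [this] at h; exact ne_of_gt h.1
    have h2 : g2 p ≠ 1 := by
      have : g2 (p.1, p.2) = g2 p := by rw [Prod.mk.eta]
      rw [this] at h; exact ne_of_lt h.2
    exact (Real.contDiffAt_arcsin h1 h2).comp p hg2.contDiffAt
  set B : ℝ × ℝ → ℝ := fun p => Real.arcsin (g2 p) with hBdef
  have hdB : Differentiable ℝ B := hB.differentiable (by simp)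
  -- px B a b = sqrt (1 - f2 (a,b)^2)
  have hpxB : ∀ a b : ℝ, deriv (fun x' => B (x', b)) a
      = Real.sqrt (1 - f2 (a, b) ^ 2) := by
    intro a b
    have h := abs_lt.1 (hbg a b)
    have hch : HasDerivAt (fun x' => Real.arcsin (g2 (x', b)))
        ((1 / Real.sqrt (1 - g2 (a, b) ^ 2)) * fderiv ℝ g2 (a, b) (1, 0)) a :=
      (Real.hasDerivAt_arcsin (ne_of_gt h.1) (ne_of_lt h.2)).comp (h := fun x' => g2 (x', b)) a (sliceX hdg2 a b)
    rw [hch.deriv, hXg a b, one_div, mul_comm, mul_assoc,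
      mul_inv_cancel₀ (ne_of_gt (hsg a b)), mul_one]
  -- py v = sqrt(1 - g2^2) + py B
  have hpyv : ∀ a b : ℝ, py v a b
      = Real.sqrt (1 - g2 (a, b) ^ 2) + fderiv ℝ B (a, b) (0, 1) := by
    intro a b
    have hf := abs_lt.1 (hbf a b)
    have hA : HasDerivAt (fun y' => Real.arcsin (f2 (a, y')))
        ((1 / Real.sqrt (1 - f2 (a, b) ^ 2)) * fderiv ℝ f2 (a, b) (0, 1)) b :=
      (Real.hasDerivAt_arcsin (ne_of_gt hf.1) (ne_of_lt hf.2)).comp (h := fun y' => f2 (a, y')) b (sliceY hdf2 a b)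
    have hBd : HasDerivAt (fun y' => B (a, y')) (fderiv ℝ B (a, b) (0, 1)) b :=
      sliceY hdB a b
    have hsum := hA.fun_add hBd
    have e : (fun y' => v a y')
        = fun y' => Real.arcsin (f2 (a, y')) + B (a, y') := by
      funext y'; rw [hv a y', hpx a y', hpy a y']
    show deriv (fun y' => v a y') b = _
    rw [e, hsum.deriv, hYf a b]
    have hs : Real.sqrt (1 - f2 (a, b) ^ 2) ≠ 0 := ne_of_gt (hsf a b)
    field_simp
  intro x y
  -- pyB as a differentiable function
  have hFB : ContDiff ℝ (⊤ : ℕ∞) (fderiv ℝ B) := hB.fderiv_right (by simp)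
  have hpyB2 : Differentiable ℝ (fun p : ℝ × ℝ => fderiv ℝ B p ((0:ℝ), (1:ℝ))) :=
    (hFB.clm_apply contDiff_const).differentiable (by simp)
  -- term 1 : derivative of sqrt(1 - g2^2) in x
  have hg := abs_lt.1 (hbg x y)
  have hne0 : 1 - g2 (x, y) ^ 2 ≠ 0 := by nlinarith [hg.1, hg.2]
  have hinner : HasDerivAt (fun x' => 1 - g2 (x', y) ^ 2)
      (0 - 2 * g2 (x, y) ^ 1 * fderiv ℝ g2 (x, y) (1, 0)) x :=
    (hasDerivAt_const x (1:ℝ)).sub ((sliceX hdg2 x y).pow 2)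
  have hterm1 : HasDerivAt (fun x' => Real.sqrt (1 - g2 (x', y) ^ 2))
      ((1 / (2 * Real.sqrt (1 - g2 (x, y) ^ 2)))
        * (0 - 2 * g2 (x, y) ^ 1 * fderiv ℝ g2 (x, y) (1, 0))) x :=
    (Real.hasDerivAt_sqrt hne0).comp x hinner
  have hterm2 : HasDerivAt (fun x' => fderiv ℝ B (x', y) ((0:ℝ), (1:ℝ)))
      (fderiv ℝ (fun p : ℝ × ℝ => fderiv ℝ B p ((0:ℝ), (1:ℝ))) (x, y) (1, 0)) x :=
    sliceX hpyB2 x y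
  have hsum := hterm1.fun_add hterm2
  -- compute term 2 via Clairaut for B
  have hd2 : fderiv ℝ (fun p : ℝ × ℝ => fderiv ℝ B p ((0:ℝ), (1:ℝ))) (x, y) (1, 0)
      = -(f2 (x, y) * Real.sqrt (1 - g2 (x, y) ^ 2)) := by
    have h1 : fderiv ℝ (fun p : ℝ × ℝ => fderiv ℝ B p ((0:ℝ), (1:ℝ))) (x, y) (1, 0)
        = deriv (fun x' => fderiv ℝ B (x', y) ((0:ℝ), (1:ℝ))) x :=
      (sliceX hpyB2 x y).deriv.symm
    have e1 : (fun x' => fderiv ℝ B (x', y) ((0:ℝ), (1:ℝ)))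
        = fun x' => deriv (fun y' => B (x', y')) y := by
      funext x'; exact (sliceY hdB x' y).deriv.symm
    have hmix := mixedsym (W := B) hB x y
    have e2 : (fun y' => deriv (fun x' => B (x', y')) x)
        = fun y' => Real.sqrt (1 - f2 (x, y') ^ 2) := by
      funext y'; exact hpxB x y'
    rw [h1, e1, hmix, e2]
    -- derivative of sqrt(1 - f2(x, ·)^2) at y
    have hf := abs_lt.1 (hbf x y)
    have hfne0 : 1 - f2 (x, y) ^ 2 ≠ 0 := by nlinarith [hf.1, hf.2]
    have hinner' : HasDerivAt (fun y' => 1 - f2 (x, y') ^ 2)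
        (0 - 2 * f2 (x, y) ^ 1 * fderiv ℝ f2 (x, y) (0, 1)) y :=
      (hasDerivAt_const y (1:ℝ)).sub ((sliceY hdf2 x y).pow 2)
    have hs : HasDerivAt (fun y' => Real.sqrt (1 - f2 (x, y') ^ 2))
        ((1 / (2 * Real.sqrt (1 - f2 (x, y) ^ 2)))
          * (0 - 2 * f2 (x, y) ^ 1 * fderiv ℝ f2 (x, y) (0, 1))) y :=
      (Real.hasDerivAt_sqrt hfne0).comp y hinner'
    rw [hs.deriv, hYf x y]
    have hsne : Real.sqrt (1 - f2 (x, y) ^ 2) ≠ 0 := ne_of_gt (hsf x y)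
    field_simp
    ring
  -- put together the left-hand side
  have hLHS : px (py v) x y
      = -(g2 (x, y) * Real.sqrt (1 - f2 (x, y) ^ 2))
        + -(f2 (x, y) * Real.sqrt (1 - g2 (x, y) ^ 2)) := by
    have e : (fun x' => py v x' y)
        = fun x' => Real.sqrt (1 - g2 (x', y) ^ 2)
            + fderiv ℝ B (x', y) ((0:ℝ), (1:ℝ)) := by
      funext x'; exact hpyv x' y
    show deriv (fun x' => py v x' y) x = _
    rw [e, hsum.deriv, hd2, hXg x y]
    have hsne : Real.sqrt (1 - g2 (x, y) ^ 2) ≠ 0 := ne_of_gt (hsg x y)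
    field_simp
    ring
  -- right-hand side
  have hf := abs_lt.1 (hbf x y)
  have hg' := abs_lt.1 (hbg x y)
  have hRHS : -Real.sin (v x y)
      = -(g2 (x, y) * Real.sqrt (1 - f2 (x, y) ^ 2))
        + -(f2 (x, y) * Real.sqrt (1 - g2 (x, y) ^ 2)) := by
    rw [hv x y, hpx x y, hpy x y, Real.sin_add,
      Real.sin_arcsin (le_of_lt hf.1) (le_of_lt hf.2),
      Real.sin_arcsin (le_of_lt hg'.1) (le_of_lt hg'.2),
      Real.cos_arcsin, Real.cos_arcsin]
    ring
  rw [hLHS, hRHS]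
end

section
/- Let u : ℝ² → ℝ be a smooth function of (x,y) with u_x > 0 and u_y > 0 everywhere, satisfying the Goursat equation u_xy = √(u_x·u_y) at every point. Define v = √(u_x) + √(u_y). Then v satisfies the linear Klein–Gordon equation v_xy = v/4 at every point. -/
section aux
variable {g : ℝ → ℝ → ℝ}

lemma line1_hasFDerivAt (x y : ℝ) :
    HasFDerivAt (fun x' : ℝ => ((x', y) : ℝ × ℝ)) ((ContinuousLinearMap.id ℝ ℝ).prod 0) x :=
  (hasFDerivAt_id x).prodMk (hasFDerivAt_const y x)

lemma line2_hasFDerivAt (x y : ℝ) :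
    HasFDerivAt (fun y' : ℝ => ((x, y') : ℝ × ℝ)) ((0 : ℝ →L[ℝ] ℝ).prod (ContinuousLinearMap.id ℝ ℝ)) y :=
  (hasFDerivAt_const x y).prodMk (hasFDerivAt_id y)

lemma px_eq_fderiv (x y : ℝ)
    (h : DifferentiableAt ℝ (fun p : ℝ × ℝ => g p.1 p.2) (x, y)) :
    px g x y = fderiv ℝ (fun p : ℝ × ℝ => g p.1 p.2) (x, y) (1, 0) := by
  have hc : HasDerivAt (fun x' => g x' y)
      (fderiv ℝ (fun p : ℝ × ℝ => g p.1 p.2) (x, y) (1, 0)) x := by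
    have := (h.hasFDerivAt.comp x (line1_hasFDerivAt x y)).hasDerivAt
    exact this
  exact hc.deriv.symm ▸ rfl

lemma py_eq_fderiv (x y : ℝ)
    (h : DifferentiableAt ℝ (fun p : ℝ × ℝ => g p.1 p.2) (x, y)) :
    py g x y = fderiv ℝ (fun p : ℝ × ℝ => g p.1 p.2) (x, y) (0, 1) := by
  have hc : HasDerivAt (fun y' => g x y')
      (fderiv ℝ (fun p : ℝ × ℝ => g p.1 p.2) (x, y) (0, 1)) y := by
    have := (h.hasFDerivAt.comp y (line2_hasFDerivAt x y)).hasDerivAt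
    exact this
  exact hc.deriv.symm ▸ rfl
end aux

example (x y : ℝ) (g : ℝ → ℝ → ℝ) (h : DifferentiableAt ℝ (fun p : ℝ × ℝ => g p.1 p.2) (x, y)) : True := trivial

section schwarz
variable {g : ℝ → ℝ → ℝ}

lemma diff_sec1 {x y : ℝ} (h : DifferentiableAt ℝ (fun p : ℝ × ℝ => g p.1 p.2) (x, y)) :
    DifferentiableAt ℝ (fun x' => g x' y) x :=
  h.comp (g := fun p : ℝ × ℝ => g p.1 p.2) x (line1_hasFDerivAt x y).differentiableAt

lemma diff_sec2 {x y : ℝ} (h : DifferentiableAt ℝ (fun p : ℝ × ℝ => g p.1 p.2) (x, y)) :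
    DifferentiableAt ℝ (fun y' => g x y') y :=
  h.comp (g := fun p : ℝ × ℝ => g p.1 p.2) y (line2_hasFDerivAt x y).differentiableAt

lemma px_of_contDiff
    (h : ∀ p : ℝ × ℝ, ContDiffAt ℝ (⊤ : ℕ∞) (fun q : ℝ × ℝ => g q.1 q.2) p) :
    ∀ x y : ℝ, px g x y = fderiv ℝ (fun p : ℝ × ℝ => g p.1 p.2) (x, y) (1, 0) :=
  fun x y => px_eq_fderiv x y ((h (x, y)).differentiableAt (by simp))

lemma py_of_contDiff
    (h : ∀ p : ℝ × ℝ, ContDiffAt ℝ (⊤ : ℕ∞) (fun q : ℝ × ℝ => g q.1 q.2) p) :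
    ∀ x y : ℝ, py g x y = fderiv ℝ (fun p : ℝ × ℝ => g p.1 p.2) (x, y) (0, 1) :=
  fun x y => py_eq_fderiv x y ((h (x, y)).differentiableAt (by simp))

lemma contDiffAt_fderiv_apply
    (h : ∀ p : ℝ × ℝ, ContDiffAt ℝ (⊤ : ℕ∞) (fun q : ℝ × ℝ => g q.1 q.2) p) (p : ℝ × ℝ) (w : ℝ × ℝ) :
    ContDiffAt ℝ (⊤ : ℕ∞) (fun q : ℝ × ℝ => fderiv ℝ (fun r : ℝ × ℝ => g r.1 r.2) q w) p :=
  ((h p).fderiv_right (by simp)).clm_apply contDiffAt_const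

lemma fderiv_fderiv_apply
    (h : ∀ p : ℝ × ℝ, ContDiffAt ℝ (⊤ : ℕ∞) (fun q : ℝ × ℝ => g q.1 q.2) p) (p : ℝ × ℝ) (v w : ℝ × ℝ) :
    fderiv ℝ (fun q : ℝ × ℝ => fderiv ℝ (fun r : ℝ × ℝ => g r.1 r.2) q w) p v =
      fderiv ℝ (fderiv ℝ (fun r : ℝ × ℝ => g r.1 r.2)) p v w := by
  have hc : DifferentiableAt ℝ (fderiv ℝ (fun r : ℝ × ℝ => g r.1 r.2)) p :=
    ((h p).fderiv_right (m := 1) (by exact WithTop.coe_le_coe.mpr le_top)).differentiableAt (by simp)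
  have := fderiv_clm_apply (c := fderiv ℝ (fun r : ℝ × ℝ => g r.1 r.2))
    (u := fun _ => w) hc (differentiableAt_const w)
  rw [this]
  simp

lemma schwarz
    (h : ∀ p : ℝ × ℝ, ContDiffAt ℝ (⊤ : ℕ∞) (fun q : ℝ × ℝ => g q.1 q.2) p) (x y : ℝ) :
    px (py g) x y = py (px g) x y := by
  set G := fun q : ℝ × ℝ => g q.1 q.2 with hG
  have h1 : px (py g) x y
      = fderiv ℝ (fun q : ℝ × ℝ => fderiv ℝ G q (0, 1)) (x, y) (1, 0) := by
    have e : (fun x' => py g x' y) = fun x' => fderiv ℝ G (x', y) (0, 1) := by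
      funext x'; exact py_of_contDiff h x' y
    show deriv (fun x' => py g x' y) x = _
    rw [e]
    exact px_eq_fderiv (g := fun a b => fderiv ℝ G (a, b) (0, 1)) x y
      ((contDiffAt_fderiv_apply h (x, y) (0, 1)).differentiableAt (by simp))
  have h2 : py (px g) x y
      = fderiv ℝ (fun q : ℝ × ℝ => fderiv ℝ G q (1, 0)) (x, y) (0, 1) := by
    have e : (fun y' => px g x y') = fun y' => fderiv ℝ G (x, y') (1, 0) := by
      funext y'; exact px_of_contDiff h x y'
    show deriv (fun y' => px g x y') y = _
    rw [e]
    exact py_eq_fderiv (g := fun a b => fderiv ℝ G (a, b) (1, 0)) x y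
      ((contDiffAt_fderiv_apply h (x, y) (1, 0)).differentiableAt (by simp))
  rw [h1, h2, fderiv_fderiv_apply h, fderiv_fderiv_apply h]
  exact (h (x, y)).isSymmSndFDerivAt (by rw [minSmoothness_of_isRCLikeNormedField]; exact WithTop.coe_le_coe.mpr (le_top : (2 : ℕ∞) ≤ ⊤)) _ _
end schwarz

section more
variable {g : ℝ → ℝ → ℝ}

lemma contDiffAt_px (h : ∀ p : ℝ × ℝ, ContDiffAt ℝ (⊤ : ℕ∞) (fun q : ℝ × ℝ => g q.1 q.2) p) :
    ∀ p : ℝ × ℝ, ContDiffAt ℝ (⊤ : ℕ∞) (fun q : ℝ × ℝ => px g q.1 q.2) p := by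
  intro p
  have e : (fun q : ℝ × ℝ => px g q.1 q.2)
      = fun q : ℝ × ℝ => fderiv ℝ (fun r : ℝ × ℝ => g r.1 r.2) q (1, 0) := by
    funext q; exact px_of_contDiff h q.1 q.2
  rw [e]
  exact contDiffAt_fderiv_apply h p (1, 0)

lemma contDiffAt_py (h : ∀ p : ℝ × ℝ, ContDiffAt ℝ (⊤ : ℕ∞) (fun q : ℝ × ℝ => g q.1 q.2) p) :
    ∀ p : ℝ × ℝ, ContDiffAt ℝ (⊤ : ℕ∞) (fun q : ℝ × ℝ => py g q.1 q.2) p := by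
  intro p
  have e : (fun q : ℝ × ℝ => py g q.1 q.2)
      = fun q : ℝ × ℝ => fderiv ℝ (fun r : ℝ × ℝ => g r.1 r.2) q (0, 1) := by
    funext q; exact py_of_contDiff h q.1 q.2
  rw [e]
  exact contDiffAt_fderiv_apply h p (0, 1)

lemma px_sqrt (x y : ℝ) (hd : DifferentiableAt ℝ (fun x' => g x' y) x) (hpos : g x y ≠ 0) :
    px (fun a b => Real.sqrt (g a b)) x y = px g x y / (2 * Real.sqrt (g x y)) :=
  deriv_sqrt hd hpos

lemma py_sqrt (x y : ℝ) (hd : DifferentiableAt ℝ (fun y' => g x y') y) (hpos : g x y ≠ 0) :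
    py (fun a b => Real.sqrt (g a b)) x y = py g x y / (2 * Real.sqrt (g x y)) :=
  deriv_sqrt hd hpos
end more

theorem stmt_2 (u v : ℝ → ℝ → ℝ)
    (hu : ContDiff ℝ (⊤ : ℕ∞) (fun p : ℝ × ℝ => u p.1 p.2))
    (hux : ∀ x y, 0 < px u x y)
    (huy : ∀ x y, 0 < py u x y)
    (heq : ∀ x y, px (py u) x y = Real.sqrt (px u x y * py u x y))
    (hv : ∀ x y, v x y = Real.sqrt (px u x y) + Real.sqrt (py u x y)) :
    ∀ x y, px (py v) x y = v x y / 4 := by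
  set a : ℝ → ℝ → ℝ := fun x y => Real.sqrt (px u x y) with ha_def
  set b : ℝ → ℝ → ℝ := fun x y => Real.sqrt (py u x y) with hb_def
  have hU : ∀ p : ℝ × ℝ, ContDiffAt ℝ (⊤ : ℕ∞) (fun q : ℝ × ℝ => u q.1 q.2) p := fun p => hu.contDiffAt
  have hA : ∀ p : ℝ × ℝ, ContDiffAt ℝ (⊤ : ℕ∞) (fun q : ℝ × ℝ => px u q.1 q.2) p := contDiffAt_px hU
  have hB : ∀ p : ℝ × ℝ, ContDiffAt ℝ (⊤ : ℕ∞) (fun q : ℝ × ℝ => py u q.1 q.2) p := contDiffAt_py hU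
  have ha : ∀ p : ℝ × ℝ, ContDiffAt ℝ (⊤ : ℕ∞) (fun q : ℝ × ℝ => a q.1 q.2) p := fun p =>
    (Real.contDiffAt_sqrt (ne_of_gt (hux p.1 p.2))).comp p (hA p)
  have hb : ∀ p : ℝ × ℝ, ContDiffAt ℝ (⊤ : ℕ∞) (fun q : ℝ × ℝ => b q.1 q.2) p := fun p =>
    (Real.contDiffAt_sqrt (ne_of_gt (huy p.1 p.2))).comp p (hB p)
  have hane : ∀ x y, a x y ≠ 0 := fun x y => ne_of_gt (Real.sqrt_pos.mpr (hux x y))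
  have hbne : ∀ x y, b x y ≠ 0 := fun x y => ne_of_gt (Real.sqrt_pos.mpr (huy x y))
  have hmul : ∀ x y : ℝ, Real.sqrt (px u x y * py u x y) = a x y * b x y := fun x y =>
    Real.sqrt_mul (le_of_lt (hux x y)) _
  -- f1 : py a = b / 2
  have f1 : ∀ x y, py a x y = b x y / 2 := by
    intro x y
    have h1 : py a x y = py (px u) x y / (2 * a x y) :=
      py_sqrt x y (diff_sec2 ((hA (x, y)).differentiableAt (by simp))) (ne_of_gt (hux x y))
    rw [h1, ← schwarz hU, heq, hmul]
    field_simp [hane x y]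
  -- f2 : px b = a / 2
  have f2 : ∀ x y, px b x y = a x y / 2 := by
    intro x y
    have h1 : px b x y = px (py u) x y / (2 * b x y) :=
      px_sqrt x y (diff_sec1 ((hB (x, y)).differentiableAt (by simp))) (ne_of_gt (huy x y))
    rw [h1, heq, hmul]
    field_simp [hbne x y]
  -- f3 : py v = b/2 + py b
  have f3 : ∀ x y, py v x y = b x y / 2 + py b x y := by
    intro x y
    have e : (fun y' => v x y') = fun y' => a x y' + b x y' := by
      funext y'; exact hv x y'
    show deriv (fun y' => v x y') y = _
    rw [e, deriv_fun_add (diff_sec2 ((ha (x, y)).differentiableAt (by simp)))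
      (diff_sec2 ((hb (x, y)).differentiableAt (by simp)))]
    rw [show deriv (fun y' => a x y') y = py a x y from rfl,
      show deriv (fun y' => b x y') y = py b x y from rfl, f1]
  intro x y
  have e : (fun x' => py v x' y) = fun x' => b x' y / 2 + py b x' y := by
    funext x'; exact f3 x' y
  show deriv (fun x' => py v x' y) x = _
  rw [e, deriv_fun_add ((diff_sec1 ((hb (x, y)).differentiableAt (by simp))).div_const 2)
    (diff_sec1 ((contDiffAt_py hb (x, y)).differentiableAt (by simp)))]
  have t1 : deriv (fun x' => b x' y / 2) x = a x y / 4 := by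
    rw [deriv_div_const, show deriv (fun x' => b x' y) x = px b x y from rfl, f2]
    ring
  have t2 : deriv (fun x' => py b x' y) x = b x y / 4 := by
    have : deriv (fun x' => py b x' y) x = px (py b) x y := rfl
    rw [this, schwarz hb]
    have e2 : (fun y' => px b x y') = fun y' => a x y' / 2 := by
      funext y'; exact f2 x y'
    show deriv (fun y' => px b x y') y = _
    rw [e2, deriv_div_const, show deriv (fun y' => a x y') y = py a x y from rfl, f1]
    ring
  rw [t1, t2, hv]
  ring
end

section
/- Let γ : ℝ → ℝ be a smooth function with γ'(t) ≠ 0 for all t, satisfying the ordinary differential equation 1 − γ''(t)/γ'(t)² = γ'(t) for all t. Let u : ℝ² → ℝ be a smooth function of (x,y) satisfying u_xy = 1/γ'(u_y) at every point. Define v = u_x + γ(u_y) + u. Then v satisfies v_xy = 1 at every point. -/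
lemma hasDerivAt_sliceX (w : ℝ → ℝ → ℝ) (hw : ContDiff ℝ (⊤ : ℕ∞) (fun p : ℝ × ℝ => w p.1 p.2))
    (a b : ℝ) : HasDerivAt (fun x' => w x' b) (px w a b) a := by
  have hd : DifferentiableAt ℝ (fun x' => w x' b) a := by
    have : (fun x' => w x' b) = (fun p : ℝ × ℝ => w p.1 p.2) ∘ (fun x' => (x', b)) := rfl
    rw [this]
    exact ((hw.differentiable (by simp)).differentiableAt).comp a (by fun_prop)
  simpa [px] using hd.hasDerivAt

lemma hasDerivAt_sliceY (w : ℝ → ℝ → ℝ) (hw : ContDiff ℝ (⊤ : ℕ∞) (fun p : ℝ × ℝ => w p.1 p.2))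
    (a b : ℝ) : HasDerivAt (fun y' => w a y') (py w a b) b := by
  have hd : DifferentiableAt ℝ (fun y' => w a y') b := by
    have : (fun y' => w a y') = (fun p : ℝ × ℝ => w p.1 p.2) ∘ (fun y' => (a, y')) := rfl
    rw [this]
    exact ((hw.differentiable (by simp)).differentiableAt).comp b (by fun_prop)
  simpa [py] using hd.hasDerivAt

lemma px_eq_fderiv_s5 (w : ℝ → ℝ → ℝ) (hw : ContDiff ℝ (⊤ : ℕ∞) (fun p : ℝ × ℝ => w p.1 p.2))
    (a b : ℝ) : px w a b = fderiv ℝ (fun p : ℝ × ℝ => w p.1 p.2) (a, b) (1, 0) := by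
  have hline : HasDerivAt (fun x' : ℝ => ((x', b) : ℝ × ℝ)) ((1 : ℝ), (0 : ℝ)) a :=
    (hasDerivAt_id a).prodMk (hasDerivAt_const a b)
  have h := (((hw.differentiable (by simp)) (a, b)).hasFDerivAt).comp_hasDerivAt a hline
  exact h.deriv ▸ rfl

lemma py_eq_fderiv_s5 (w : ℝ → ℝ → ℝ) (hw : ContDiff ℝ (⊤ : ℕ∞) (fun p : ℝ × ℝ => w p.1 p.2))
    (a b : ℝ) : py w a b = fderiv ℝ (fun p : ℝ × ℝ => w p.1 p.2) (a, b) (0, 1) := by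
  have hline : HasDerivAt (fun y' : ℝ => ((a, y') : ℝ × ℝ)) ((0 : ℝ), (1 : ℝ)) b :=
    (hasDerivAt_const b a).prodMk (hasDerivAt_id b)
  have h := (((hw.differentiable (by simp)) (a, b)).hasFDerivAt).comp_hasDerivAt b hline
  exact h.deriv ▸ rfl

lemma contDiff_px (w : ℝ → ℝ → ℝ) (hw : ContDiff ℝ (⊤ : ℕ∞) (fun p : ℝ × ℝ => w p.1 p.2)) :
    ContDiff ℝ (⊤ : ℕ∞) (fun p : ℝ × ℝ => px w p.1 p.2) := by
  have : (fun p : ℝ × ℝ => px w p.1 p.2)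
      = fun p : ℝ × ℝ => fderiv ℝ (fun q : ℝ × ℝ => w q.1 q.2) p ((1 : ℝ), (0 : ℝ)) := by
    funext p
    exact px_eq_fderiv_s5 w hw p.1 p.2
  rw [this]
  exact (hw.fderiv_right (by exact_mod_cast le_top)).clm_apply contDiff_const

lemma contDiff_py (w : ℝ → ℝ → ℝ) (hw : ContDiff ℝ (⊤ : ℕ∞) (fun p : ℝ × ℝ => w p.1 p.2)) :
    ContDiff ℝ (⊤ : ℕ∞) (fun p : ℝ × ℝ => py w p.1 p.2) := by
  have : (fun p : ℝ × ℝ => py w p.1 p.2)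
      = fun p : ℝ × ℝ => fderiv ℝ (fun q : ℝ × ℝ => w q.1 q.2) p ((0 : ℝ), (1 : ℝ)) := by
    funext p
    exact py_eq_fderiv_s5 w hw p.1 p.2
  rw [this]
  exact (hw.fderiv_right (by exact_mod_cast le_top)).clm_apply contDiff_const

lemma snd_fderiv_eval (w : ℝ → ℝ → ℝ) (hw : ContDiff ℝ (⊤ : ℕ∞) (fun p : ℝ × ℝ => w p.1 p.2))
    (c : ℝ × ℝ) (a b : ℝ) :
    fderiv ℝ (fun p : ℝ × ℝ => fderiv ℝ (fun q : ℝ × ℝ => w q.1 q.2) p c) (a, b)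
      = ((fderiv ℝ (fderiv ℝ (fun q : ℝ × ℝ => w q.1 q.2)) (a, b)).flip c : ℝ × ℝ →L[ℝ] ℝ) := by
  set W := fun q : ℝ × ℝ => w q.1 q.2
  have hD : DifferentiableAt ℝ (fderiv ℝ W) (a, b) :=
    ((hw.fderiv_right (m := (⊤ : ℕ∞)) (by exact_mod_cast le_top)).differentiable (by simp)).differentiableAt
  have h := ((ContinuousLinearMap.apply ℝ ℝ c).hasFDerivAt).comp (a, b) hD.hasFDerivAt
  have := h.fderiv
  rw [show ((ContinuousLinearMap.apply ℝ ℝ c) ∘ fderiv ℝ W)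
        = (fun p => fderiv ℝ W p c) from rfl] at this
  rw [this]
  refine ContinuousLinearMap.ext fun v => ?_
  simp

lemma clairaut (w : ℝ → ℝ → ℝ) (hw : ContDiff ℝ (⊤ : ℕ∞) (fun p : ℝ × ℝ => w p.1 p.2))
    (a b : ℝ) : px (py w) a b = py (px w) a b := by
  set W := fun q : ℝ × ℝ => w q.1 q.2 with hW
  have hsymm : IsSymmSndFDerivAt ℝ W (a, b) :=
    (hw.contDiffAt).isSymmSndFDerivAt (by rw [minSmoothness_of_isRCLikeNormedField]; exact WithTop.coe_le_coe.mpr le_top)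
  have hpyw : ∀ p : ℝ × ℝ, py w p.1 p.2 = fderiv ℝ W p ((0:ℝ), (1:ℝ)) := fun p =>
    py_eq_fderiv_s5 w hw p.1 p.2
  have hpxw : ∀ p : ℝ × ℝ, px w p.1 p.2 = fderiv ℝ W p ((1:ℝ), (0:ℝ)) := fun p =>
    px_eq_fderiv_s5 w hw p.1 p.2
  have h1 : px (py w) a b
      = fderiv ℝ (fun p : ℝ × ℝ => fderiv ℝ W p ((0:ℝ),(1:ℝ))) (a, b) (1, 0) := by
    have hc : ContDiff ℝ (⊤ : ℕ∞) (fun p : ℝ × ℝ => py w p.1 p.2) := contDiff_py w hw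
    rw [px_eq_fderiv_s5 (py w) hc a b]
    congr 1
    apply Filter.EventuallyEq.fderiv_eq
    exact Filter.Eventually.of_forall (fun p => hpyw p)
  have h2 : py (px w) a b
      = fderiv ℝ (fun p : ℝ × ℝ => fderiv ℝ W p ((1:ℝ),(0:ℝ))) (a, b) (0, 1) := by
    have hc : ContDiff ℝ (⊤ : ℕ∞) (fun p : ℝ × ℝ => px w p.1 p.2) := contDiff_px w hw
    rw [py_eq_fderiv_s5 (px w) hc a b]
    congr 1
    apply Filter.EventuallyEq.fderiv_eq
    exact Filter.Eventually.of_forall (fun p => hpxw p)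
  rw [h1, h2, snd_fderiv_eval w hw _ a b, snd_fderiv_eval w hw _ a b]
  simp only [ContinuousLinearMap.flip_apply]
  exact hsymm _ _

theorem stmt_5 (γ : ℝ → ℝ) (u v : ℝ → ℝ → ℝ)
    (hγ : ContDiff ℝ (⊤ : ℕ∞) γ)
    (hγ' : ∀ t, deriv γ t ≠ 0)
    (hode : ∀ t, 1 - deriv (deriv γ) t / (deriv γ t) ^ 2 = deriv γ t)
    (hu : ContDiff ℝ (⊤ : ℕ∞) (fun p : ℝ × ℝ => u p.1 p.2))
    (heq : ∀ x y, px (py u) x y = 1 / deriv γ (py u x y))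
    (hv : ∀ x y, v x y = px u x y + γ (py u x y) + u x y) :
    ∀ x y, px (py v) x y = 1 := by
  intro x y
  have hUx : ContDiff ℝ (⊤ : ℕ∞) (fun p : ℝ × ℝ => px u p.1 p.2) := contDiff_px u hu
  have hUy : ContDiff ℝ (⊤ : ℕ∞) (fun p : ℝ × ℝ => py u p.1 p.2) := contDiff_py u hu
  have hUyy : ContDiff ℝ (⊤ : ℕ∞) (fun p : ℝ × ℝ => py (py u) p.1 p.2) := contDiff_py (py u) hUy
  have hγinf : ContDiff ℝ ((⊤ : ℕ∞) : WithTop ℕ∞) γ := hγ.of_le (by simp)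
  have hγd : ContDiff ℝ ((⊤ : ℕ∞) : WithTop ℕ∞) (deriv γ) :=
    (contDiff_infty_iff_deriv.mp hγinf).2
  -- Step A : compute py v
  have hpyv : ∀ a b, py v a b =
      (deriv γ (py u a b))⁻¹ + deriv γ (py u a b) * py (py u) a b + py u a b := by
    intro a b
    have h1 : HasDerivAt (fun y' => px u a y') (py (px u) a b) b :=
      hasDerivAt_sliceY (px u) hUx a b
    have hPy : HasDerivAt (fun y' => py u a y') (py (py u) a b) b :=
      hasDerivAt_sliceY (py u) hUy a b
    have h2 : HasDerivAt (fun y' => γ (py u a y'))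
        (deriv γ (py u a b) * py (py u) a b) b :=
      ((hγ.differentiable (by simp)) (py u a b)).hasDerivAt.comp b hPy
    have h3 : HasDerivAt (fun y' => u a y') (py u a b) b := hasDerivAt_sliceY u hu a b
    have hsum : HasDerivAt (fun y' => v a y')
        (py (px u) a b + deriv γ (py u a b) * py (py u) a b + py u a b) b := by
      have h := (h1.add h2).add h3
      have hfe : (fun y' => v a y') = fun y' => px u a y' + γ (py u a y') + u a y' :=
        funext fun y' => hv a y'
      rw [hfe]
      exact h
    have hd : py v a b
        = py (px u) a b + deriv γ (py u a b) * py (py u) a b + py u a b := hsum.deriv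
    rw [hd, ← clairaut u hu a b, heq a b, one_div]
  -- Step B : differentiate in x
  have hP : HasDerivAt (fun x' => py u x' y) ((deriv γ (py u x y))⁻¹) x := by
    have h := hasDerivAt_sliceX (py u) hUy x y
    rw [heq x y, one_div] at h
    exact h
  have hQval : px (py (py u)) x y
      = -(deriv (deriv γ) (py u x y) * py (py u) x y) / (deriv γ (py u x y)) ^ 2 := by
    rw [clairaut (py u) hUy x y]
    have hPy : HasDerivAt (fun y' => py u x y') (py (py u) x y) y :=
      hasDerivAt_sliceY (py u) hUy x y
    have hg : HasDerivAt (fun y' => deriv γ (py u x y'))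
        (deriv (deriv γ) (py u x y) * py (py u) x y) y :=
      ((hγd.differentiable (by simp)) (py u x y)).hasDerivAt.comp y hPy
    have hinv : HasDerivAt (fun y' => (deriv γ (py u x y'))⁻¹)
        (-(deriv (deriv γ) (py u x y) * py (py u) x y) / (deriv γ (py u x y)) ^ 2) y :=
      hg.inv (hγ' _)
    have hfun : (fun y' => px (py u) x y') = fun y' => (deriv γ (py u x y'))⁻¹ := by
      funext y'
      rw [heq x y', one_div]
    have : py (px (py u)) x y = deriv (fun y' => px (py u) x y') y := rfl
    rw [this, hfun, hinv.deriv]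
  have hQ : HasDerivAt (fun x' => py (py u) x' y)
      (-(deriv (deriv γ) (py u x y) * py (py u) x y) / (deriv γ (py u x y)) ^ 2) x := by
    have h := hasDerivAt_sliceX (py (py u)) hUyy x y
    rw [hQval] at h
    exact h
  have hgP : HasDerivAt (fun x' => deriv γ (py u x' y))
      (deriv (deriv γ) (py u x y) * (deriv γ (py u x y))⁻¹) x :=
    (((hγd.differentiable (by simp)) (py u x y)).hasDerivAt.comp x hP :)
  have hinv2 : HasDerivAt (fun x' => (deriv γ (py u x' y))⁻¹)
      (-(deriv (deriv γ) (py u x y) * (deriv γ (py u x y))⁻¹) / (deriv γ (py u x y)) ^ 2) x :=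
    hgP.inv (hγ' _)
  have hmul : HasDerivAt (fun x' => deriv γ (py u x' y) * py (py u) x' y)
      (deriv (deriv γ) (py u x y) * (deriv γ (py u x y))⁻¹ * py (py u) x y
        + deriv γ (py u x y) *
          (-(deriv (deriv γ) (py u x y) * py (py u) x y) / (deriv γ (py u x y)) ^ 2)) x :=
    hgP.mul hQ
  have htot := (hinv2.add hmul).add hP
  have hfun2 : (fun x' => py v x' y)
      = fun x' => (deriv γ (py u x' y))⁻¹ + deriv γ (py u x' y) * py (py u) x' y
          + py u x' y := funext fun x' => hpyv x' y
  show deriv (fun x' => py v x' y) x = 1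
  rw [hfun2]
  erw [htot.deriv]
  -- algebra
  have hode' := hode (py u x y)
  set g1 := deriv γ (py u x y) with hg1
  set g2 := deriv (deriv γ) (py u x y) with hg2
  have hg1ne : g1 ≠ 0 := hγ' _
  field_simp at hode' ⊢
  linear_combination hode'
end

section
/- Let c₁, c₂ be nonzero real constants and let μ, α : ℝ → ℝ be smooth functions satisfying μ'(t)(c₁ + c₂) + μ(t)²(c₁ + c₂) + α''(t) + α'(t)μ(t) = 0 for all t. Let u : ℝ² → ℝ be a smooth function of (x,y) with u_x > 0 and u_y > 0 everywhere, satisfying u_xy = μ(u)·u_x·u_y at every point. Define v = c₁·ln(u_x) + c₂·ln(u_y) + α(u). Then v satisfies the wave equation v_xy = 0 at every point. -/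
open scoped ContDiff

noncomputable def dX (f : ℝ × ℝ → ℝ) : ℝ × ℝ → ℝ := fun p => fderiv ℝ f p (1, 0)
noncomputable def dY (f : ℝ × ℝ → ℝ) : ℝ × ℝ → ℝ := fun p => fderiv ℝ f p (0, 1)

lemma sliceX_s6 (f : ℝ × ℝ → ℝ) (hf : ContDiff ℝ ∞ f) (x y : ℝ) :
    HasDerivAt (fun x' => f (x', y)) (dX f (x, y)) x := by
  have h1 : HasDerivAt (fun x' : ℝ => ((x', y) : ℝ × ℝ)) (1, 0) x :=
    (hasDerivAt_id x).prodMk (hasDerivAt_const x y)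
  exact ((hf.differentiable (by norm_num)).differentiableAt.hasFDerivAt).comp_hasDerivAt x h1

lemma sliceY_s6 (f : ℝ × ℝ → ℝ) (hf : ContDiff ℝ ∞ f) (x y : ℝ) :
    HasDerivAt (fun y' => f (x, y')) (dY f (x, y)) y := by
  have h1 : HasDerivAt (fun y' : ℝ => ((x, y') : ℝ × ℝ)) (0, 1) y :=
    (hasDerivAt_const y x).prodMk (hasDerivAt_id y)
  exact ((hf.differentiable (by norm_num)).differentiableAt.hasFDerivAt).comp_hasDerivAt y h1

lemma contDiff_dX (f : ℝ × ℝ → ℝ) (hf : ContDiff ℝ ∞ f) : ContDiff ℝ ∞ (dX f) :=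
  (ContinuousLinearMap.apply ℝ ℝ ((1:ℝ), (0:ℝ))).contDiff.comp
    (hf.fderiv_right (m := ∞) (by norm_num))

lemma contDiff_dY (f : ℝ × ℝ → ℝ) (hf : ContDiff ℝ ∞ f) : ContDiff ℝ ∞ (dY f) :=
  (ContinuousLinearMap.apply ℝ ℝ ((0:ℝ), (1:ℝ))).contDiff.comp
    (hf.fderiv_right (m := ∞) (by norm_num))

lemma symmXY (f : ℝ × ℝ → ℝ) (hf : ContDiff ℝ ∞ f) (p : ℝ × ℝ) :
    dX (dY f) p = dY (dX f) p := by
  have hfd : DifferentiableAt ℝ (fderiv ℝ f) p :=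
    (((hf.fderiv_right (m := ∞) (by norm_num)).differentiable (by norm_num))).differentiableAt
  have hY : HasFDerivAt (dY f)
      ((ContinuousLinearMap.apply ℝ ℝ ((0:ℝ),(1:ℝ))).comp (fderiv ℝ (fderiv ℝ f) p)) p :=
    ((ContinuousLinearMap.apply ℝ ℝ ((0:ℝ),(1:ℝ))).hasFDerivAt).comp p hfd.hasFDerivAt
  have hX : HasFDerivAt (dX f)
      ((ContinuousLinearMap.apply ℝ ℝ ((1:ℝ),(0:ℝ))).comp (fderiv ℝ (fderiv ℝ f) p)) p :=
    ((ContinuousLinearMap.apply ℝ ℝ ((1:ℝ),(0:ℝ))).hasFDerivAt).comp p hfd.hasFDerivAt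
  have hsym := hf.contDiffAt.isSymmSndFDerivAt (n := ∞) (by simp; exact WithTop.coe_le_coe.mpr (le_top : (2:ℕ∞) ≤ ⊤)) (x := p)
  have e1 : dX (dY f) p = fderiv ℝ (fderiv ℝ f) p (1,0) (0,1) := by
    simp [dX, hY.fderiv]
  have e2 : dY (dX f) p = fderiv ℝ (fderiv ℝ f) p (0,1) (1,0) := by
    simp [dY, hX.fderiv]
  rw [e1, e2, hsym]

theorem stmt_6 (c₁ c₂ : ℝ) (hc₁ : c₁ ≠ 0) (hc₂ : c₂ ≠ 0)
    (μ α : ℝ → ℝ) (hμ : ContDiff ℝ (⊤ : ℕ∞) μ) (hα : ContDiff ℝ (⊤ : ℕ∞) α)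
    (hode : ∀ t, deriv μ t * (c₁ + c₂) + μ t ^ 2 * (c₁ + c₂) +
      deriv (deriv α) t + deriv α t * μ t = 0)
    (u v : ℝ → ℝ → ℝ)
    (hu : ContDiff ℝ (⊤ : ℕ∞) (fun p : ℝ × ℝ => u p.1 p.2))
    (hux : ∀ x y, 0 < px u x y)
    (huy : ∀ x y, 0 < py u x y)
    (heq : ∀ x y, px (py u) x y = μ (u x y) * px u x y * py u x y)
    (hv : ∀ x y, v x y = c₁ * Real.log (px u x y) + c₂ * Real.log (py u x y) + α (u x y)) :
    ∀ x y, px (py v) x y = 0 := by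
  set F : ℝ × ℝ → ℝ := fun p => u p.1 p.2 with hFdef
  have hF : ContDiff ℝ ∞ F := hu.of_le (by simp)
  have hμi : ContDiff ℝ ∞ μ := hμ.of_le (by simp)
  have hαi : ContDiff ℝ ∞ α := hα.of_le (by simp)
  obtain ⟨hαdiff, hαd⟩ := contDiff_infty_iff_deriv.mp hαi
  obtain ⟨hαd_diff, -⟩ := contDiff_infty_iff_deriv.mp hαd
  obtain ⟨hμdiff, -⟩ := contDiff_infty_iff_deriv.mp hμi
  have hdXF : ContDiff ℝ ∞ (dX F) := contDiff_dX F hF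
  have hdYF : ContDiff ℝ ∞ (dY F) := contDiff_dY F hF
  have hdYdYF : ContDiff ℝ ∞ (dY (dY F)) := contDiff_dY _ hdYF
  have hpx : ∀ x y, px u x y = dX F (x, y) := fun x y => (sliceX_s6 F hF x y).deriv
  have hpy : ∀ x y, py u x y = dY F (x, y) := fun x y => (sliceY_s6 F hF x y).deriv
  have hP : ∀ x y, 0 < dX F (x, y) := fun x y => hpx x y ▸ hux x y
  have hQ : ∀ x y, 0 < dY F (x, y) := fun x y => hpy x y ▸ huy x y
  have hPne : ∀ x y, dX F (x, y) ≠ 0 := fun x y => ne_of_gt (hP x y)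
  have hQne : ∀ x y, dY F (x, y) ≠ 0 := fun x y => ne_of_gt (hQ x y)
  -- the equation in dX/dY form
  have heq' : ∀ x y, dX (dY F) (x, y) = μ (u x y) * dX F (x, y) * dY F (x, y) := by
    intro x y
    have h := heq x y
    rw [hpx x y, hpy x y] at h
    have e : (fun x' => py u x' y) = fun x' => dY F (x', y) := funext fun x' => hpy x' y
    have h2 : px (py u) x y = dX (dY F) (x, y) := by
      show deriv (fun x' => py u x' y) x = _
      rw [e]
      exact (sliceX_s6 (dY F) hdYF x y).deriv
    rw [h2] at h
    exact h
  have heq'p : ∀ p : ℝ × ℝ, dX (dY F) p = μ (F p) * dX F p * dY F p := by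
    rintro ⟨x, y⟩; exact heq' x y
  have hsymm1 : ∀ x y, dY (dX F) (x, y) = μ (u x y) * dX F (x, y) * dY F (x, y) := fun x y => by
    rw [← symmXY F hF (x, y)]; exact heq' x y
  -- third order mixed derivative
  have hh : ContDiff ℝ ∞ (fun p : ℝ × ℝ => μ (F p) * dX F p * dY F p) :=
    ((hμi.comp hF).mul hdXF).mul hdYF
  have hT : ∀ x y, dX (dY (dY F)) (x, y) =
      (deriv μ (u x y) * dY F (x, y) * dX F (x, y) + μ (u x y) * dY (dX F) (x, y)) * dY F (x, y)
        + (μ (u x y) * dX F (x, y)) * dY (dY F) (x, y) := by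
    intro x y
    rw [symmXY (dY F) hdYF (x, y)]
    have efun : dX (dY F) = fun p => μ (F p) * dX F p * dY F p := funext heq'p
    rw [efun]
    have h1 := sliceY_s6 (fun p => μ (F p) * dX F p * dY F p) hh x y
    have hFy : HasDerivAt (fun y' => F (x, y')) (dY F (x, y)) y := sliceY_s6 F hF x y
    have hμy : HasDerivAt (fun y' => μ (F (x, y'))) (deriv μ (u x y) * dY F (x, y)) y :=
      (hμdiff.differentiableAt.hasDerivAt).comp y hFy
    have hXy : HasDerivAt (fun y' => dX F (x, y')) (dY (dX F) (x, y)) y := sliceY_s6 (dX F) hdXF x y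
    have hYy : HasDerivAt (fun y' => dY F (x, y')) (dY (dY F) (x, y)) y := sliceY_s6 (dY F) hdYF x y
    have h2 := (hμy.mul hXy).mul hYy
    have := h1.unique h2
    rw [this]
    rfl
  -- first derivative of v in y
  have hpyv : ∀ x y, py v x y =
      c₁ * (μ (u x y) * dY F (x, y)) + c₂ * (dY (dY F) (x, y) / dY F (x, y))
        + deriv α (u x y) * dY F (x, y) := by
    intro x y
    have hXy : HasDerivAt (fun y' => dX F (x, y')) (dY (dX F) (x, y)) y := sliceY_s6 (dX F) hdXF x y
    have hYy : HasDerivAt (fun y' => dY F (x, y')) (dY (dY F) (x, y)) y := sliceY_s6 (dY F) hdYF x y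
    have hFy : HasDerivAt (fun y' => F (x, y')) (dY F (x, y)) y := sliceY_s6 F hF x y
    have hlog1 : HasDerivAt (fun y' => Real.log (dX F (x, y')))
        (dY (dX F) (x, y) / dX F (x, y)) y := hXy.log (hPne x y)
    have hlog2 : HasDerivAt (fun y' => Real.log (dY F (x, y')))
        (dY (dY F) (x, y) / dY F (x, y)) y := hYy.log (hQne x y)
    have hαy : HasDerivAt (fun y' => α (F (x, y'))) (deriv α (u x y) * dY F (x, y)) y :=
      (hαdiff.differentiableAt.hasDerivAt).comp y hFy
    have htot := ((hlog1.const_mul c₁).add (hlog2.const_mul c₂)).add hαy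
    have e : (fun y' => v x y') = fun y' =>
        c₁ * Real.log (dX F (x, y')) + c₂ * Real.log (dY F (x, y')) + α (F (x, y')) :=
      funext fun y' => by rw [hv x y', hpx x y', hpy x y']
    show deriv (fun y' => v x y') y = _
    rw [e]; erw [htot.deriv]; rw [hsymm1 x y]
    have := hPne x y
    field_simp
  -- main computation
  intro x y
  have e : (fun x' => py v x' y) = fun x' =>
      c₁ * (μ (u x' y) * dY F (x', y)) + c₂ * (dY (dY F) (x', y) / dY F (x', y))
        + deriv α (u x' y) * dY F (x', y) := funext fun x' => hpyv x' y
  show deriv (fun x' => py v x' y) x = 0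
  rw [e]
  have hFx : HasDerivAt (fun x' => F (x', y)) (dX F (x, y)) x := sliceX_s6 F hF x y
  have hμx : HasDerivAt (fun x' => μ (u x' y)) (deriv μ (u x y) * dX F (x, y)) x :=
    (hμdiff.differentiableAt.hasDerivAt).comp x hFx
  have hQx : HasDerivAt (fun x' => dY F (x', y)) (dX (dY F) (x, y)) x := sliceX_s6 (dY F) hdYF x y
  have hSx : HasDerivAt (fun x' => dY (dY F) (x', y)) (dX (dY (dY F)) (x, y)) x :=
    sliceX_s6 (dY (dY F)) hdYdYF x y
  have hαx : HasDerivAt (fun x' => deriv α (u x' y)) (deriv (deriv α) (u x y) * dX F (x, y)) x :=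
    (hαd_diff.differentiableAt.hasDerivAt).comp x hFx
  have htot := (((hμx.mul hQx).const_mul c₁).add
    ((hSx.div hQx (hQne x y)).const_mul c₂)).add (hαx.mul hQx)
  erw [htot.deriv]; rw [hT x y, hsymm1 x y, heq' x y]
  have h0 := hode (u x y)
  have hq := hQne x y
  field_simp
  linear_combination (dX F (x, y) * dY F (x, y) ^ 2) * h0
end

section
/- Let u : ℝ² → ℝ be a smooth function of (x,y) with u_x > 0 everywhere, satisfying u_xy = u_x·√(u_y² + 1) at every point. Define v = ln(u_x) + ln(u_y + √(u_y² + 1)). Then v satisfies the Liouville equation v_xy = exp(v) at every point. -/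
private lemma lineDerivFst (G : ℝ × ℝ → ℝ) (x y : ℝ) (hG : DifferentiableAt ℝ G (x, y)) :
    HasDerivAt (fun x' => G (x', y)) (fderiv ℝ G (x, y) (1, 0)) x := by
  have h1 : HasDerivAt (fun x' : ℝ => ((x', y) : ℝ × ℝ)) (1, 0) x :=
    (hasDerivAt_id x).prodMk (hasDerivAt_const x y)
  exact hG.hasFDerivAt.comp_hasDerivAt x h1

private lemma lineDerivSnd (G : ℝ × ℝ → ℝ) (x y : ℝ) (hG : DifferentiableAt ℝ G (x, y)) :
    HasDerivAt (fun y' => G (x, y')) (fderiv ℝ G (x, y) (0, 1)) y := by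
  have h1 : HasDerivAt (fun y' : ℝ => ((x, y') : ℝ × ℝ)) (0, 1) y :=
    (hasDerivAt_const y x).prodMk (hasDerivAt_id y)
  exact hG.hasFDerivAt.comp_hasDerivAt y h1

private lemma symm2 (G : ℝ × ℝ → ℝ) (hG : ContDiff ℝ (⊤ : ℕ∞) G) (p v w : ℝ × ℝ) :
    fderiv ℝ (fun q => fderiv ℝ G q w) p v = fderiv ℝ (fun q => fderiv ℝ G q v) p w := by
  have hG' : ContDiff ℝ (⊤ : ℕ∞) (fderiv ℝ G) := hG.fderiv_right (by simp)
  have h1 : ∀ q, HasFDerivAt G (fderiv ℝ G q) q := fun q =>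
    (hG.differentiable (by simp) q).hasFDerivAt
  have h2 : HasFDerivAt (fderiv ℝ G) (fderiv ℝ (fderiv ℝ G) p) p :=
    (hG'.differentiable (by simp) p).hasFDerivAt
  have key := second_derivative_symmetric h1 h2 v w
  have e : ∀ z : ℝ × ℝ, fderiv ℝ (fun q => fderiv ℝ G q z) p
      = (fderiv ℝ (fderiv ℝ G) p).flip z := by
    intro z
    have := fderiv_clm_apply (hG'.differentiable (by simp) p) (differentiableAt_const z)
    simpa using this
  rw [e w, e v]
  simp only [ContinuousLinearMap.flip_apply]
  exact key

theorem stmt_9 (u v : ℝ → ℝ → ℝ)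
    (hu : ContDiff ℝ (⊤ : ℕ∞) (fun p : ℝ × ℝ => u p.1 p.2))
    (hux : ∀ x y, 0 < px u x y)
    (heq : ∀ x y, px (py u) x y = px u x y * Real.sqrt ((py u x y) ^ 2 + 1))
    (hv : ∀ x y, v x y = Real.log (px u x y) +
      Real.log (py u x y + Real.sqrt ((py u x y) ^ 2 + 1))) :
    ∀ x y, px (py v) x y = Real.exp (v x y) := by
  intro x y
  set F : ℝ × ℝ → ℝ := fun p => u p.1 p.2 with hFdef
  have hF : ContDiff ℝ (⊤ : ℕ∞) F := hu
  have hF' : ContDiff ℝ (⊤ : ℕ∞) (fderiv ℝ F) := hF.fderiv_right (by simp)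
  set Af : ℝ × ℝ → ℝ := fun q => fderiv ℝ F q (1, 0) with hAdef
  set Bf : ℝ × ℝ → ℝ := fun q => fderiv ℝ F q (0, 1) with hBdef
  have hAf : ContDiff ℝ (⊤ : ℕ∞) Af := hF'.clm_apply contDiff_const
  have hBf : ContDiff ℝ (⊤ : ℕ∞) Bf := hF'.clm_apply contDiff_const
  have hBf' : ContDiff ℝ (⊤ : ℕ∞) (fderiv ℝ Bf) := hBf.fderiv_right (by simp)
  set Df : ℝ × ℝ → ℝ := fun q => fderiv ℝ Bf q (0, 1) with hDdef
  set Cf : ℝ × ℝ → ℝ := fun q => fderiv ℝ Bf q (1, 0) with hCdef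
  have hDf : ContDiff ℝ (⊤ : ℕ∞) Df := hBf'.clm_apply contDiff_const
  have hCf : ContDiff ℝ (⊤ : ℕ∞) Cf := hBf'.clm_apply contDiff_const
  have hpx : ∀ a b, px u a b = Af (a, b) := fun a b =>
    (lineDerivFst F a b (hF.differentiable (by simp) _)).deriv
  have hpy : ∀ a b, py u a b = Bf (a, b) := fun a b =>
    (lineDerivSnd F a b (hF.differentiable (by simp) _)).deriv
  have hCeq : ∀ a b, Cf (a, b) = Af (a, b) * Real.sqrt (Bf (a, b) ^ 2 + 1) := by
    intro a b
    have hfun : (fun x' => py u x' b) = fun x' => Bf (x', b) := funext fun x' => hpy x' b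
    have h1 : px (py u) a b = Cf (a, b) := by
      show deriv (fun x' => py u x' b) a = _
      rw [hfun]
      exact (lineDerivFst Bf a b (hBf.differentiable (by simp) _)).deriv
    rw [← h1, heq a b, hpx, hpy]
  have hApos : ∀ a b, 0 < Af (a, b) := fun a b => hpx a b ▸ hux a b
  have hspos : ∀ a b, 0 < Real.sqrt (Bf (a, b) ^ 2 + 1) := fun a b =>
    Real.sqrt_pos.2 (by positivity)
  have hssq : ∀ a b, Real.sqrt (Bf (a, b) ^ 2 + 1) ^ 2 = Bf (a, b) ^ 2 + 1 := fun a b =>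
    Real.sq_sqrt (by positivity)
  have hBspos : ∀ a b, 0 < Bf (a, b) + Real.sqrt (Bf (a, b) ^ 2 + 1) := by
    intro a b
    nlinarith [hspos a b, hssq a b]
  have hAyBx : ∀ q : ℝ × ℝ, fderiv ℝ Af q (0, 1) = fderiv ℝ Bf q (1, 0) := fun q =>
    symm2 F hF q (0, 1) (1, 0)
  -- compute py v
  have hpyv : ∀ a b, py v a b =
      Real.sqrt (Bf (a, b) ^ 2 + 1) + Df (a, b) / Real.sqrt (Bf (a, b) ^ 2 + 1) := by
    intro a b
    have hA' : HasDerivAt (fun y' => Af (a, y')) (fderiv ℝ Af (a, b) (0, 1)) b :=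
      lineDerivSnd Af a b (hAf.differentiable (by simp) _)
    have hB' : HasDerivAt (fun y' => Bf (a, y')) (Df (a, b)) b :=
      lineDerivSnd Bf a b (hBf.differentiable (by simp) _)
    have hsq' : HasDerivAt (fun y' => Bf (a, y') ^ 2 + 1)
        (2 * Bf (a, b) * Df (a, b)) b := by
      simpa [mul_comm, mul_assoc] using ((hB'.pow 2).add_const 1)
    have hs' : HasDerivAt (fun y' => Real.sqrt (Bf (a, y') ^ 2 + 1))
        ((2 * Bf (a, b) * Df (a, b)) / (2 * Real.sqrt (Bf (a, b) ^ 2 + 1))) b :=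
      hsq'.sqrt (by positivity)
    have hlog1 : HasDerivAt (fun y' => Real.log (Af (a, y')))
        (fderiv ℝ Af (a, b) (0, 1) / Af (a, b)) b := hA'.log (ne_of_gt (hApos a b))
    have hlog2 : HasDerivAt
        (fun y' => Real.log (Bf (a, y') + Real.sqrt (Bf (a, y') ^ 2 + 1)))
        ((Df (a, b) + (2 * Bf (a, b) * Df (a, b)) / (2 * Real.sqrt (Bf (a, b) ^ 2 + 1)))
          / (Bf (a, b) + Real.sqrt (Bf (a, b) ^ 2 + 1))) b :=
      (hB'.add hs').log (ne_of_gt (hBspos a b))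
    have htot := hlog1.add hlog2
    have hfun : (fun y' => v a y') = fun y' =>
        Real.log (Af (a, y')) + Real.log (Bf (a, y') + Real.sqrt (Bf (a, y') ^ 2 + 1)) :=
      funext fun y' => by rw [hv, hpx, hpy]
    have hder : py v a b =
        fderiv ℝ Af (a, b) (0, 1) / Af (a, b) +
          (Df (a, b) + (2 * Bf (a, b) * Df (a, b)) / (2 * Real.sqrt (Bf (a, b) ^ 2 + 1)))
            / (Bf (a, b) + Real.sqrt (Bf (a, b) ^ 2 + 1)) := by
      show deriv (fun y' => v a y') b = _
      rw [hfun]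
      exact htot.deriv
    rw [hder, hAyBx (a, b), show (fderiv ℝ Bf (a, b)) (1, 0) = Af (a, b) * Real.sqrt (Bf (a, b) ^ 2 + 1) from hCeq a b]
    have h1 := hApos a b
    have h2 := hspos a b
    have h3 := hBspos a b
    have h4 := hssq a b
    set s := Real.sqrt (Bf (a, b) ^ 2 + 1) with hsdef
    field_simp
    ring
  -- compute px (py v) at (x, y)
  have hBx : HasDerivAt (fun x' => Bf (x', y)) (fderiv ℝ Bf (x, y) (1, 0)) x :=
    lineDerivFst Bf x y (hBf.differentiable (by simp) _)
  have hsqx : HasDerivAt (fun x' => Bf (x', y) ^ 2 + 1)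
      (2 * Bf (x, y) * fderiv ℝ Bf (x, y) (1, 0)) x := by
    simpa [mul_comm, mul_assoc] using ((hBx.pow 2).add_const 1)
  have hsx : HasDerivAt (fun x' => Real.sqrt (Bf (x', y) ^ 2 + 1))
      ((2 * Bf (x, y) * fderiv ℝ Bf (x, y) (1, 0)) / (2 * Real.sqrt (Bf (x, y) ^ 2 + 1))) x :=
    hsqx.sqrt (by positivity)
  have hDx : HasDerivAt (fun x' => Df (x', y)) (fderiv ℝ Df (x, y) (1, 0)) x :=
    lineDerivFst Df x y (hDf.differentiable (by simp) _)
  have hquot := hDx.div hsx (ne_of_gt (hspos x y))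
  have htot := hsx.add hquot
  have hfun : (fun x' => py v x' y) = fun x' =>
      Real.sqrt (Bf (x', y) ^ 2 + 1) + Df (x', y) / Real.sqrt (Bf (x', y) ^ 2 + 1) :=
    funext fun x' => hpyv x' y
  have hval : px (py v) x y =
      (2 * Bf (x, y) * fderiv ℝ Bf (x, y) (1, 0)) / (2 * Real.sqrt (Bf (x, y) ^ 2 + 1)) +
        (fderiv ℝ Df (x, y) (1, 0) * Real.sqrt (Bf (x, y) ^ 2 + 1) -
          Df (x, y) *
            ((2 * Bf (x, y) * fderiv ℝ Bf (x, y) (1, 0)) /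
              (2 * Real.sqrt (Bf (x, y) ^ 2 + 1)))) /
          Real.sqrt (Bf (x, y) ^ 2 + 1) ^ 2 := by
    show deriv (fun x' => py v x' y) x = _
    rw [hfun]
    exact htot.deriv
  -- compute fderiv Df (x,y) (1,0)
  have hDxval : fderiv ℝ Df (x, y) (1, 0) =
      fderiv ℝ Af (x, y) (0, 1) * Real.sqrt (Bf (x, y) ^ 2 + 1) +
        Af (x, y) *
          ((2 * Bf (x, y) * Df (x, y)) / (2 * Real.sqrt (Bf (x, y) ^ 2 + 1))) := by
    have h1 : fderiv ℝ Df (x, y) (1, 0) = fderiv ℝ Cf (x, y) (0, 1) :=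
      symm2 Bf hBf (x, y) (1, 0) (0, 1)
    have hC' : HasDerivAt (fun y' => Cf (x, y')) (fderiv ℝ Cf (x, y) (0, 1)) y :=
      lineDerivSnd Cf x y (hCf.differentiable (by simp) _)
    have hA' : HasDerivAt (fun y' => Af (x, y')) (fderiv ℝ Af (x, y) (0, 1)) y :=
      lineDerivSnd Af x y (hAf.differentiable (by simp) _)
    have hB' : HasDerivAt (fun y' => Bf (x, y')) (Df (x, y)) y :=
      lineDerivSnd Bf x y (hBf.differentiable (by simp) _)
    have hsq' : HasDerivAt (fun y' => Bf (x, y') ^ 2 + 1)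
        (2 * Bf (x, y) * Df (x, y)) y := by
      simpa [mul_comm, mul_assoc] using ((hB'.pow 2).add_const 1)
    have hs' : HasDerivAt (fun y' => Real.sqrt (Bf (x, y') ^ 2 + 1))
        ((2 * Bf (x, y) * Df (x, y)) / (2 * Real.sqrt (Bf (x, y) ^ 2 + 1))) y :=
      hsq'.sqrt (by positivity)
    have hprod : HasDerivAt (fun y' => Af (x, y') * Real.sqrt (Bf (x, y') ^ 2 + 1)) _ y :=
      hA'.mul hs'
    have hfun2 : (fun y' => Cf (x, y')) =
        fun y' => Af (x, y') * Real.sqrt (Bf (x, y') ^ 2 + 1) :=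
      funext fun y' => hCeq x y'
    rw [h1, ← hC'.deriv, hfun2, hprod.deriv]
  have hvxy : v x y =
      Real.log (Af (x, y)) + Real.log (Bf (x, y) + Real.sqrt (Bf (x, y) ^ 2 + 1)) := by
    rw [hv, hpx, hpy]
  rw [hval, hvxy, Real.exp_add, Real.exp_log (hApos x y), Real.exp_log (hBspos x y),
    hDxval, hAyBx (x, y), show (fderiv ℝ Bf (x, y)) (1, 0) = Af (x, y) * Real.sqrt (Bf (x, y) ^ 2 + 1) from hCeq x y]
  have h1 := hApos x y
  have h2 := hspos x y
  have h4 := hssq x y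
  set s := Real.sqrt (Bf (x, y) ^ 2 + 1) with hsdef
  field_simp
  ring
end

section
/- Let c, c₁, c₂ be real constants and let μ, α : ℝ → ℝ be smooth functions satisfying (μ'(t) + μ(t)²)(c₁ + c₂) + α''(t) + α'(t)μ(t) = 0 and c₁μ'(t) + μ(t)²(c₁ + c₂) + α'(t)μ(t) = 0 for all t. Let u : ℝ² → ℝ be a smooth function of (x,y) with u_x ≠ 0 everywhere, satisfying u_xy = μ(u)·(u_y + c)·u_x at every point. Then the function ω = c₂·μ(u)·u_x + c₁·u_xx/u_x + α'(u)·u_x is an x-integral of this equation: the partial derivative of ω with respect to y vanishes at every point. -/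
private lemma hasDerivAt_fst {W : Type*} [NormedAddCommGroup W] [NormedSpace ℝ W]
    {g : ℝ × ℝ → W} (hg : Differentiable ℝ g) (x y : ℝ) :
    HasDerivAt (fun x' => g (x', y)) (fderiv ℝ g (x, y) (1, 0)) x := by
  have h1 : HasDerivAt (fun x' : ℝ => ((x' : ℝ), y)) ((1 : ℝ), (0 : ℝ)) x :=
    (hasDerivAt_id x).prodMk (hasDerivAt_const x y)
  exact (hg (x, y)).hasFDerivAt.comp_hasDerivAt x h1

private lemma hasDerivAt_snd {W : Type*} [NormedAddCommGroup W] [NormedSpace ℝ W]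
    {g : ℝ × ℝ → W} (hg : Differentiable ℝ g) (x y : ℝ) :
    HasDerivAt (fun y' => g (x, y')) (fderiv ℝ g (x, y) (0, 1)) y := by
  have h1 : HasDerivAt (fun y' : ℝ => (x, (y' : ℝ))) ((0 : ℝ), (1 : ℝ)) y :=
    (hasDerivAt_const y x).prodMk (hasDerivAt_id y)
  exact (hg (x, y)).hasFDerivAt.comp_hasDerivAt y h1

private lemma fderiv_apply_const {W : Type*} [NormedAddCommGroup W] [NormedSpace ℝ W]
    {N : ℝ × ℝ → (ℝ × ℝ) →L[ℝ] W} {p : ℝ × ℝ} (hN : DifferentiableAt ℝ N p) (v w : ℝ × ℝ) :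
    fderiv ℝ (fun q => N q v) p w = fderiv ℝ N p w v := by
  have h : fderiv ℝ (fun q => N q v) p =
      (ContinuousLinearMap.apply ℝ W v).comp (fderiv ℝ N p) :=
    ((ContinuousLinearMap.apply ℝ W v).hasFDerivAt.comp p hN.hasFDerivAt).fderiv
  rw [h]; rfl

set_option maxHeartbeats 1000000 in
theorem stmt_11 (c c₁ c₂ : ℝ) (μ α : ℝ → ℝ)
    (hμ : ContDiff ℝ (⊤ : ℕ∞) μ) (hα : ContDiff ℝ (⊤ : ℕ∞) α)
    (hode₁ : ∀ t, (deriv μ t + μ t ^ 2) * (c₁ + c₂) + deriv (deriv α) t +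
      deriv α t * μ t = 0)
    (hode₂ : ∀ t, c₁ * deriv μ t + μ t ^ 2 * (c₁ + c₂) + deriv α t * μ t = 0)
    (u : ℝ → ℝ → ℝ)
    (hu : ContDiff ℝ (⊤ : ℕ∞) (fun p : ℝ × ℝ => u p.1 p.2))
    (hux : ∀ x y, px u x y ≠ 0)
    (heq : ∀ x y, px (py u) x y = μ (u x y) * (py u x y + c) * px u x y) :
    ∀ x y, py (fun x y => c₂ * μ (u x y) * px u x y +
      c₁ * (px (px u) x y / px u x y) + deriv α (u x y) * px u x y) x y = 0 := by
  -- notation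
  set F : ℝ × ℝ → ℝ := fun p => u p.1 p.2 with hFdef
  set e1 : ℝ × ℝ := (1, 0) with he1
  set e2 : ℝ × ℝ := (0, 1) with he2
  set D1 : ℝ × ℝ → (ℝ × ℝ) →L[ℝ] ℝ := fderiv ℝ F with hD1def
  set D2 := fderiv ℝ D1 with hD2def
  set D3 := fderiv ℝ D2 with hD3def
  have hF : ContDiff ℝ (⊤ : ℕ∞) F := hu
  have H1 : ContDiff ℝ (⊤ : ℕ∞) D1 := hF.fderiv_right (by simp)
  have H2 : ContDiff ℝ (⊤ : ℕ∞) D2 := H1.fderiv_right (by simp)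
  have hFd : Differentiable ℝ F := hF.differentiable (by simp)
  have H1d : Differentiable ℝ D1 := H1.differentiable (by simp)
  have H2d : Differentiable ℝ D2 := H2.differentiable (by simp)
  set A1 : ℝ × ℝ → ℝ := fun p => D1 p e1 with hA1def
  set B1 : ℝ × ℝ → ℝ := fun p => D1 p e2 with hB1def
  set A2 : ℝ × ℝ → ℝ := fun p => D2 p e1 e1 with hA2def
  have hA1d : Differentiable ℝ A1 := (H1.clm_apply contDiff_const).differentiable (by simp)
  have hB1d : Differentiable ℝ B1 := (H1.clm_apply contDiff_const).differentiable (by simp)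
  have hA2d : Differentiable ℝ A2 :=
    ((H2.clm_apply contDiff_const).clm_apply contDiff_const).differentiable (by simp)
  have hμd : Differentiable ℝ μ := hμ.differentiable (by simp)
  have halphaI : ContDiff ℝ (⊤ : ℕ∞) α := hα.of_le (by simp)
  have hαd : Differentiable ℝ (deriv α) :=
    ((contDiff_infty_iff_deriv.mp halphaI).2).differentiable (by simp)
  -- basic identifications
  have hpx : ∀ x y, px u x y = A1 (x, y) := fun x y => (hasDerivAt_fst hFd x y).deriv
  have hpy : ∀ x y, py u x y = B1 (x, y) := fun x y => (hasDerivAt_snd hFd x y).deriv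
  have hfxA1 : ∀ x y, fderiv ℝ A1 (x, y) e1 = D2 (x, y) e1 e1 :=
    fun x y => fderiv_apply_const (H1d (x, y)) e1 e1
  have hfyA1 : ∀ x y, fderiv ℝ A1 (x, y) e2 = D2 (x, y) e2 e1 :=
    fun x y => fderiv_apply_const (H1d (x, y)) e1 e2
  have hfxB1 : ∀ x y, fderiv ℝ B1 (x, y) e1 = D2 (x, y) e1 e2 :=
    fun x y => fderiv_apply_const (H1d (x, y)) e2 e1
  have hpxx : ∀ x y, px (px u) x y = A2 (x, y) := by
    intro x y
    have hfun : (fun x' => px u x' y) = (fun x' => A1 (x', y)) := funext fun x' => hpx x' y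
    show deriv (fun x' => px u x' y) x = A2 (x, y)
    rw [hfun, (hasDerivAt_fst hA1d x y).deriv, hfxA1]
  -- symmetry of second derivative
  have hsymm : ∀ (p : ℝ × ℝ) (v w : ℝ × ℝ), D2 p v w = D2 p w v := fun p v w =>
    second_derivative_symmetric (fun q => (hFd q).hasFDerivAt) ((H1d p).hasFDerivAt) v w
  have hsymm3 : ∀ (p : ℝ × ℝ) (v w : ℝ × ℝ), D3 p v w = D3 p w v := fun p v w =>
    second_derivative_symmetric (fun q => (H1d q).hasFDerivAt) ((H2d p).hasFDerivAt) v w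
  -- the PDE in fderiv language
  have hE : ∀ p : ℝ × ℝ, D2 p e1 e2 = μ (F p) * (B1 p + c) * A1 p := by
    intro ⟨x, y⟩
    have h := heq x y
    have hfun : (fun x' => py u x' y) = (fun x' => B1 (x', y)) := funext fun x' => hpy x' y
    have hL : px (py u) x y = D2 (x, y) e1 e2 := by
      show deriv (fun x' => py u x' y) x = _
      rw [hfun, (hasDerivAt_fst hB1d x y).deriv, hfxB1]
    rw [hL, hpx, hpy] at h
    exact h
  -- third-derivative slot manipulations
  have hD3app : ∀ (p : ℝ × ℝ) (a b w : ℝ × ℝ),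
      fderiv ℝ (fun q => D2 q a b) p w = D3 p w a b := by
    intro p a b w
    have h1 : fderiv ℝ (fun q => (fun q' => D2 q' a) q b) p w =
        fderiv ℝ (fun q => D2 q a) p w b :=
      fderiv_apply_const ((H2.clm_apply contDiff_const).differentiable (by simp) p) b w
    have h2 : fderiv ℝ (fun q => D2 q a) p w = D3 p w a := fderiv_apply_const (H2d p) a w
    simpa [h2] using h1
  have hswap23 : ∀ (p : ℝ × ℝ) (a b w : ℝ × ℝ), D3 p w a b = D3 p w b a := by
    intro p a b w
    have hfun : (fun q => D2 q a b) = (fun q => D2 q b a) := funext fun q => hsymm q a b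
    rw [← hD3app p a b w, hfun, hD3app p b a w]
  -- compute D3 e2 e1 e1 by differentiating the PDE in x
  have hD3val : ∀ x y, D3 (x, y) e2 e1 e1 =
      ((deriv μ (u x y) * A1 (x, y)) * (B1 (x, y) + c) +
        μ (u x y) * (μ (u x y) * (B1 (x, y) + c) * A1 (x, y))) * A1 (x, y) +
      (μ (u x y) * (B1 (x, y) + c)) * A2 (x, y) := by
    intro x y
    have hs1 : D3 (x, y) e2 e1 e1 = D3 (x, y) e1 e1 e2 := by
      have := congrArg (fun T : (ℝ × ℝ) →L[ℝ] ℝ => T e1) (hsymm3 (x, y) e2 e1)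
      simpa using this.trans (hswap23 (x, y) e2 e1 e1)
    rw [hs1, ← hD3app (x, y) e1 e2 e1]
    have hGd : Differentiable ℝ (fun q => D2 q e1 e2) :=
      ((H2.clm_apply contDiff_const).clm_apply contDiff_const).differentiable (by simp)
    have hder : deriv (fun x' => D2 (x', y) e1 e2) x =
        fderiv ℝ (fun q => D2 q e1 e2) (x, y) e1 := (hasDerivAt_fst hGd x y).deriv
    rw [← hder]
    have hfun : (fun x' => D2 (x', y) e1 e2) =
        (fun x' => μ (u x' y) * (B1 (x', y) + c) * A1 (x', y)) :=
      funext fun x' => hE (x', y)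
    rw [hfun]
    -- now a one-variable computation
    have hu1 : HasDerivAt (fun x' => u x' y) (A1 (x, y)) x := hasDerivAt_fst hFd x y
    have hm : HasDerivAt (fun x' => μ (u x' y)) (deriv μ (u x y) * A1 (x, y)) x :=
      (hμd (u x y)).hasDerivAt.comp x hu1
    have hB : HasDerivAt (fun x' => B1 (x', y))
        (μ (u x y) * (B1 (x, y) + c) * A1 (x, y)) x := by
      have h := hasDerivAt_fst hB1d x y
      rwa [hfxB1, hE (x, y)] at h
    have hA : HasDerivAt (fun x' => A1 (x', y)) (A2 (x, y)) x := by
      have h := hasDerivAt_fst hA1d x y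
      rwa [hfxA1] at h
    exact ((hm.mul (hB.add_const c)).mul hA).deriv
  -- now the main computation at a point
  intro x y
  have hP : A1 (x, y) ≠ 0 := by rw [← hpx]; exact hux x y
  have hu2 : HasDerivAt (fun y' => u x y') (B1 (x, y)) y := hasDerivAt_snd hFd x y
  have gm : HasDerivAt (fun y' => μ (u x y')) (deriv μ (u x y) * B1 (x, y)) y :=
    (hμd (u x y)).hasDerivAt.comp y hu2
  have gα : HasDerivAt (fun y' => deriv α (u x y'))
      (deriv (deriv α) (u x y) * B1 (x, y)) y :=
    (hαd (u x y)).hasDerivAt.comp y hu2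
  have gA1 : HasDerivAt (fun y' => A1 (x, y'))
      (μ (u x y) * (B1 (x, y) + c) * A1 (x, y)) y := by
    have h := hasDerivAt_snd hA1d x y
    rwa [hfyA1, hsymm (x, y) e2 e1, hE (x, y)] at h
  have gA2 : HasDerivAt (fun y' => A2 (x, y'))
      (((deriv μ (u x y) * A1 (x, y)) * (B1 (x, y) + c) +
        μ (u x y) * (μ (u x y) * (B1 (x, y) + c) * A1 (x, y))) * A1 (x, y) +
      (μ (u x y) * (B1 (x, y) + c)) * A2 (x, y)) y := by
    have h := hasDerivAt_snd hA2d x y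
    have hfy : fderiv ℝ A2 (x, y) e2 = D3 (x, y) e2 e1 e1 := by
      have h1 : fderiv ℝ (fun q => (fun q' => D2 q' e1) q e1) (x, y) e2 =
          fderiv ℝ (fun q => D2 q e1) (x, y) e2 e1 :=
        fderiv_apply_const ((H2.clm_apply contDiff_const).differentiable (by simp) (x, y)) e1 e2
      have h2 : fderiv ℝ (fun q => D2 q e1) (x, y) e2 = D3 (x, y) e2 e1 :=
        fderiv_apply_const (H2d (x, y)) e1 e2
      simpa [h2] using h1
    rwa [hfy, hD3val x y] at h
  have total := (((gm.const_mul c₂).mul gA1).add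
      ((gA2.div gA1 hP).const_mul c₁)).add (gα.mul gA1)
  have hfun : (fun y' => c₂ * μ (u x y') * px u x y' +
      c₁ * (px (px u) x y' / px u x y') + deriv α (u x y') * px u x y') =
      (fun y' => c₂ * μ (u x y') * A1 (x, y') +
      c₁ * (A2 (x, y') / A1 (x, y')) + deriv α (u x y') * A1 (x, y')) := by
    funext y'
    rw [hpx, hpxx]
  show deriv (fun y' => c₂ * μ (u x y') * px u x y' +
      c₁ * (px (px u) x y' / px u x y') + deriv α (u x y') * px u x y') y = 0
  rw [hfun, (show HasDerivAt (fun y' => c₂ * μ (u x y') * A1 (x, y') +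
      c₁ * (A2 (x, y') / A1 (x, y')) + deriv α (u x y') * A1 (x, y')) _ y from total).deriv]
  -- pure algebra
  set P := A1 (x, y)
  set Q := B1 (x, y)
  set R := A2 (x, y)
  set m := μ (u x y)
  set m' := deriv μ (u x y)
  set a' := deriv α (u x y)
  set a'' := deriv (deriv α) (u x y)
  have h1 := hode₁ (u x y)
  have h2 := hode₂ (u x y)
  have hdiv : (((m' * P * (Q + c) + m * (m * (Q + c) * P)) * P + m * (Q + c) * R) * P
      - R * (m * (Q + c) * P)) / P ^ 2 = (m' + m ^ 2) * (Q + c) * P := by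
    rw [div_eq_iff (pow_ne_zero 2 hP)]; ring
  rw [hdiv]
  linear_combination (Q * P) * h1 + (c * P) * h2
end

section
/- Let μ : ℝ → ℝ be a smooth function satisfying 2μ'(t) = μ(t)² for all t. Let v : ℝ² → ℝ be a smooth function of (x,y) satisfying the Liouville equation v_xy = exp(v) at every point. Define u = v_y + μ(v_x)·exp(v). Then u satisfies u_xy = u·u_x at every point. -/
open scoped ContDiff

private lemma px_eq (g : ℝ × ℝ → ℝ) (hg : Differentiable ℝ g) (x y : ℝ) :
    px (fun a b => g (a, b)) x y = fderiv ℝ g (x, y) (1, 0) := by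
  have hc : HasDerivAt (fun x' : ℝ => ((x' : ℝ), y)) ((1 : ℝ), (0 : ℝ)) x :=
    (hasDerivAt_id x).prodMk (hasDerivAt_const x y)
  exact ((hg (x, y)).hasFDerivAt.comp_hasDerivAt x hc).deriv

private lemma py_eq (g : ℝ × ℝ → ℝ) (hg : Differentiable ℝ g) (x y : ℝ) :
    py (fun a b => g (a, b)) x y = fderiv ℝ g (x, y) (0, 1) := by
  have hc : HasDerivAt (fun y' : ℝ => ((x : ℝ), y')) ((0 : ℝ), (1 : ℝ)) y :=
    (hasDerivAt_const y x).prodMk (hasDerivAt_id y)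
  exact ((hg (x, y)).hasFDerivAt.comp_hasDerivAt y hc).deriv

private lemma contDiff_pderiv (g : ℝ × ℝ → ℝ) (hg : ContDiff ℝ (⊤ : ℕ∞) g) (w : ℝ × ℝ) :
    ContDiff ℝ (⊤ : ℕ∞) (fun p => fderiv ℝ g p w) :=
  (hg.fderiv_right (by simp)).clm_apply contDiff_const

private lemma clairaut_s16 (g : ℝ × ℝ → ℝ) (hg : ContDiff ℝ (⊤ : ℕ∞) g) (p w w' : ℝ × ℝ) :
    fderiv ℝ (fun q => fderiv ℝ g q w) p w' = fderiv ℝ (fun q => fderiv ℝ g q w') p w := by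
  have hd : Differentiable ℝ (fderiv ℝ g) := (hg.fderiv_right (m := (⊤ : ℕ∞)) (by simp)).differentiable (by simp)
  have key : ∀ a b : ℝ × ℝ, fderiv ℝ (fun q => fderiv ℝ g q a) p b
      = fderiv ℝ (fderiv ℝ g) p b a := by
    intro a b
    have h1 : HasFDerivAt (fun q => (ContinuousLinearMap.apply ℝ ℝ a) (fderiv ℝ g q))
        ((ContinuousLinearMap.apply ℝ ℝ a).comp (fderiv ℝ (fderiv ℝ g) p)) p :=
      (ContinuousLinearMap.apply ℝ ℝ a).hasFDerivAt.comp p (hd p).hasFDerivAt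
    have := h1.fderiv
    calc fderiv ℝ (fun q => fderiv ℝ g q a) p b
        = ((ContinuousLinearMap.apply ℝ ℝ a).comp (fderiv ℝ (fderiv ℝ g) p)) b := by
          rw [← this]; rfl
      _ = fderiv ℝ (fderiv ℝ g) p b a := rfl
  rw [key w w', key w' w]
  exact second_derivative_symmetric (fun q => (hg.differentiable (by simp) q).hasFDerivAt)
    (hd p).hasFDerivAt w' w

private lemma fd_add {f g : ℝ × ℝ → ℝ} {p : ℝ × ℝ} (hf : DifferentiableAt ℝ f p)
    (hg : DifferentiableAt ℝ g p) (w : ℝ × ℝ) :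
    fderiv ℝ (fun q => f q + g q) p w = fderiv ℝ f p w + fderiv ℝ g p w := by
  rw [fderiv_fun_add hf hg]; rfl

private lemma fd_mul {f g : ℝ × ℝ → ℝ} {p : ℝ × ℝ} (hf : DifferentiableAt ℝ f p)
    (hg : DifferentiableAt ℝ g p) (w : ℝ × ℝ) :
    fderiv ℝ (fun q => f q * g q) p w = fderiv ℝ f p w * g p + f p * fderiv ℝ g p w := by
  rw [(hf.hasFDerivAt.fun_mul hg.hasFDerivAt).fderiv]
  simp only [ContinuousLinearMap.add_apply, ContinuousLinearMap.coe_smul',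
    Pi.smul_apply, smul_eq_mul]
  ring

private lemma fd_comp (h : ℝ → ℝ) {f : ℝ × ℝ → ℝ} {p : ℝ × ℝ} (hh : DifferentiableAt ℝ h (f p))
    (hf : DifferentiableAt ℝ f p) (w : ℝ × ℝ) :
    fderiv ℝ (fun q => h (f q)) p w = deriv h (f p) * fderiv ℝ f p w := by
  have h1 : HasFDerivAt (fun q => h (f q)) (deriv h (f p) • fderiv ℝ f p) p :=
    hh.hasDerivAt.comp_hasFDerivAt p hf.hasFDerivAt
  rw [h1.fderiv]; simp

private lemma fd_exp {f : ℝ × ℝ → ℝ} {p : ℝ × ℝ} (hf : DifferentiableAt ℝ f p) (w : ℝ × ℝ) :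
    fderiv ℝ (fun q => Real.exp (f q)) p w = Real.exp (f p) * fderiv ℝ f p w := by
  rw [fd_comp Real.exp (Real.differentiable_exp _) hf, Real.deriv_exp]

theorem stmt_16 (μ : ℝ → ℝ) (hμ : ContDiff ℝ (⊤ : ℕ∞) μ)
    (hode : ∀ t, 2 * deriv μ t = μ t ^ 2)
    (v u : ℝ → ℝ → ℝ)
    (hv : ContDiff ℝ (⊤ : ℕ∞) (fun p : ℝ × ℝ => v p.1 p.2))
    (heq : ∀ x y, px (py v) x y = Real.exp (v x y))
    (hu : ∀ x y, u x y = py v x y + μ (px v x y) * Real.exp (v x y)) :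
    ∀ x y, px (py u) x y = u x y * px u x y := by
  -- μ facts
  have hμd : Differentiable ℝ μ := hμ.differentiable (by simp)
  have hμi : ContDiff ℝ ∞ μ := hμ.of_le (by simp)
  have hdμ : ContDiff ℝ ∞ (deriv μ) := (contDiff_infty_iff_deriv.mp hμi).2
  have hdμd : Differentiable ℝ (deriv μ) := hdμ.differentiable (by simp)
  have hmu2 : ∀ t, deriv (deriv μ) t = μ t * deriv μ t := by
    intro t
    have h1 : deriv (fun s => 2 * deriv μ s) t = deriv (fun s => μ s ^ 2) t := by
      congr 1; funext s; exact hode s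
    rw [deriv_const_mul 2 (hdμd t)] at h1
    have h2 : deriv (fun s => μ s ^ 2) t = 2 * μ t * deriv μ t := by
      have := ((hμd t).hasDerivAt.fun_pow 2).deriv
      simpa using this
    rw [h2] at h1
    nlinarith [h1]
  -- basic objects
  set F : ℝ × ℝ → ℝ := fun q => v q.1 q.2 with hFdef
  have hFc : ContDiff ℝ (⊤ : ℕ∞) F := hv
  have hFd : Differentiable ℝ F := hFc.differentiable (by simp)
  set A : ℝ × ℝ → ℝ := fun q => fderiv ℝ F q (1, 0) with hAdef
  set B : ℝ × ℝ → ℝ := fun q => fderiv ℝ F q (0, 1) with hBdef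
  have hAc : ContDiff ℝ (⊤ : ℕ∞) A := contDiff_pderiv F hFc (1, 0)
  have hBc : ContDiff ℝ (⊤ : ℕ∞) B := contDiff_pderiv F hFc (0, 1)
  have hAd : Differentiable ℝ A := hAc.differentiable (by simp)
  have hBd : Differentiable ℝ B := hBc.differentiable (by simp)
  have hpxv : ∀ a b, px v a b = A (a, b) := fun a b => px_eq F hFd a b
  have hpyv : ∀ a b, py v a b = B (a, b) := fun a b => py_eq F hFd a b
  -- the Liouville equation in fderiv form
  have heqB : ∀ q : ℝ × ℝ, fderiv ℝ B q (1, 0) = Real.exp (F q) := by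
    intro q
    have h1 : py v = fun a b => B (a, b) := funext fun a => funext fun b => hpyv a b
    have h2 := heq q.1 q.2
    rw [h1, px_eq B hBd q.1 q.2] at h2
    exact h2
  have heqA : ∀ q : ℝ × ℝ, fderiv ℝ A q (0, 1) = Real.exp (F q) := fun q =>
    (clairaut_s16 F hFc q (1, 0) (0, 1)).trans (heqB q)
  -- the function U
  set U : ℝ × ℝ → ℝ := fun q => B q + μ (A q) * Real.exp (F q) with hUdef
  have hUc : ContDiff ℝ (⊤ : ℕ∞) U := hBc.add ((hμ.comp hAc).mul (Real.contDiff_exp.comp hFc))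
  have hUd : Differentiable ℝ U := hUc.differentiable (by simp)
  have huU : u = fun a b => U (a, b) := by
    funext a b
    rw [hu a b, hpyv a b, hpxv a b]
  -- differentiability bits
  have hmuA : ∀ q, DifferentiableAt ℝ (fun r => μ (A r)) q :=
    fun q => (hμd _).comp q (hAd q)
  have hexpF : ∀ q, DifferentiableAt ℝ (fun r => Real.exp (F r)) q :=
    fun q => (Real.differentiable_exp _).comp q (hFd q)
  -- directional derivative of U
  have hdU : ∀ (q w : ℝ × ℝ), fderiv ℝ U q w
      = fderiv ℝ B q w + deriv μ (A q) * fderiv ℝ A q w * Real.exp (F q)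
        + μ (A q) * (Real.exp (F q) * fderiv ℝ F q w) := by
    intro q w
    rw [hUdef]
    rw [fd_add (hBd q) ((hmuA q).fun_mul (hexpF q)) w, fd_mul (hmuA q) (hexpF q) w,
      fd_comp μ (hμd _) (hAd q) w, fd_exp (hFd q) w]
    ring
  -- the y-partial of U as a closed formula
  have hD2U : (fun q => fderiv ℝ U q (0, 1)) = fun q =>
      fderiv ℝ B q (0, 1) + deriv μ (A q) * (Real.exp (F q) * Real.exp (F q))
        + μ (A q) * (Real.exp (F q) * B q) := by
    funext q
    have hFB : fderiv ℝ F q (0, 1) = B q := rfl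
    rw [hdU q (0, 1), heqA q, hFB]
    ring
  intro x y
  -- rewrite the goal in fderiv form
  have hpyu : py u = fun a b => fderiv ℝ U (a, b) (0, 1) := by
    funext a b
    rw [huU]
    exact py_eq U hUd a b
  have hD2Ud : Differentiable ℝ (fun q => fderiv ℝ U q (0, 1)) :=
    (contDiff_pderiv U hUc (0, 1)).differentiable (by simp)
  have hL : px (py u) x y = fderiv ℝ (fun q => fderiv ℝ U q (0, 1)) (x, y) (1, 0) := by
    rw [hpyu]
    exact px_eq _ hD2Ud x y
  have hpxu : px u x y = fderiv ℝ U (x, y) (1, 0) := by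
    rw [huU]
    exact px_eq U hUd x y
  have huxy : u x y = U (x, y) := by rw [huU]
  rw [hL, hpxu, huxy]
  set p : ℝ × ℝ := (x, y) with hpdef
  -- compute the left side
  have hB2d : Differentiable ℝ (fun q => fderiv ℝ B q (0, 1)) :=
    (contDiff_pderiv B hBc (0, 1)).differentiable (by simp)
  have hdμA : ∀ q, DifferentiableAt ℝ (fun r => deriv μ (A r)) q :=
    fun q => (hdμd _).comp q (hAd q)
  have hT1 : fderiv ℝ (fun q => fderiv ℝ B q (0, 1)) p (1, 0) = Real.exp (F p) * B p := by
    rw [clairaut_s16 B hBc p (0, 1) (1, 0)]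
    have h1 : (fun q => fderiv ℝ B q (1, 0)) = fun q => Real.exp (F q) := funext heqB
    rw [h1, fd_exp (hFd p) (0, 1)]
  have hFA : fderiv ℝ F p (1, 0) = A p := rfl
  have hBA : fderiv ℝ B p (1, 0) = Real.exp (F p) := heqB p
  -- assemble
  rw [hD2U]
  rw [fd_add (((hB2d p).fun_add ((hdμA p).fun_mul ((hexpF p).fun_mul (hexpF p))))) 
      ((hmuA p).fun_mul ((hexpF p).fun_mul (hBd p))) (1, 0),
    fd_add (hB2d p) ((hdμA p).fun_mul ((hexpF p).fun_mul (hexpF p))) (1, 0),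
    fd_mul (hdμA p) ((hexpF p).fun_mul (hexpF p)) (1, 0),
    fd_mul (hmuA p) ((hexpF p).fun_mul (hBd p)) (1, 0),
    fd_mul (hexpF p) (hexpF p) (1, 0),
    fd_mul (hexpF p) (hBd p) (1, 0),
    fd_comp (deriv μ) (hdμd _) (hAd p) (1, 0),
    fd_comp μ (hμd _) (hAd p) (1, 0),
    fd_exp (hFd p) (1, 0),
    hT1, hFA, hBA, hdU p (1, 0), hFA, hBA, hUdef]
  linear_combination (fderiv ℝ A p (1, 0) * (Real.exp (F p) * Real.exp (F p))) * hmu2 (A p)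
    + (A p * Real.exp (F p) * Real.exp (F p)) * hode (A p)
end

section
/- Let δ : ℝ → ℝ be a smooth function satisfying δ''(t) = exp(δ(t)) for all t. Let v : ℝ² → ℝ be a smooth function of (x,y) with v_x·v_y > 0 everywhere, satisfying the wave equation v_xy = 0 at every point. Define u = ln(v_x·v_y) + δ(v). Then u satisfies the Liouville equation u_xy = exp(u) at every point. -/
section Aux

variable {V : ℝ × ℝ → ℝ}

lemma hasDerivAt_p1 (hV : Differentiable ℝ V) (x y : ℝ) :
    HasDerivAt (fun x' => V (x', y)) (fderiv ℝ V (x, y) (1, 0)) x := by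
  have h1 : HasDerivAt (fun x' : ℝ => ((x' : ℝ), y)) ((1 : ℝ), (0 : ℝ)) x :=
    (hasDerivAt_id x).prodMk (hasDerivAt_const x y)
  exact (hV (x, y)).hasFDerivAt.comp_hasDerivAt x h1

lemma hasDerivAt_p2 (hV : Differentiable ℝ V) (x y : ℝ) :
    HasDerivAt (fun y' => V (x, y')) (fderiv ℝ V (x, y) (0, 1)) y := by
  have h1 : HasDerivAt (fun y' : ℝ => ((x : ℝ), y')) ((0 : ℝ), (1 : ℝ)) y :=
    (hasDerivAt_const y x).prodMk (hasDerivAt_id y)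
  exact (hV (x, y)).hasFDerivAt.comp_hasDerivAt y h1

lemma smooth_D (hV : ContDiff ℝ (⊤ : ℕ∞) V) (w : ℝ × ℝ) :
    ContDiff ℝ (⊤ : ℕ∞) (fun q => fderiv ℝ V q w) :=
  (hV.fderiv_right (by simp)).clm_apply contDiff_const

lemma fderiv_D (hV : ContDiff ℝ (⊤ : ℕ∞) V) (w p z : ℝ × ℝ) :
    fderiv ℝ (fun q => fderiv ℝ V q w) p z = fderiv ℝ (fderiv ℝ V) p z w := by
  rw [fderiv_clm_apply (((hV.fderiv_right (m := (⊤ : ℕ∞)) (by simp)).differentiable (by simp)) p)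
    (differentiableAt_const w)]
  simp

lemma sym_snd (hV : ContDiff ℝ (⊤ : ℕ∞) V) (p a b : ℝ × ℝ) :
    fderiv ℝ (fderiv ℝ V) p a b = fderiv ℝ (fderiv ℝ V) p b a := by
  apply second_derivative_symmetric (f := V)
  · exact fun z => (hV.differentiable (by simp) z).hasFDerivAt
  · exact (((hV.fderiv_right (m := (⊤ : ℕ∞)) (by simp)).differentiable (by simp)) p).hasFDerivAt

end Aux

theorem stmt_17 (δ : ℝ → ℝ) (hδ : ContDiff ℝ (⊤ : ℕ∞) δ)
    (hode : ∀ t, deriv (deriv δ) t = Real.exp (δ t))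
    (v u : ℝ → ℝ → ℝ)
    (hv : ContDiff ℝ (⊤ : ℕ∞) (fun p : ℝ × ℝ => v p.1 p.2))
    (hvxy : ∀ x y, 0 < px v x y * py v x y)
    (heq : ∀ x y, px (py v) x y = 0)
    (hu : ∀ x y, u x y = Real.log (px v x y * py v x y) + δ (v x y)) :
    ∀ x y, px (py u) x y = Real.exp (u x y) := by
  set V : ℝ × ℝ → ℝ := fun p => v p.1 p.2 with hVdef
  have hVd : Differentiable ℝ V := hv.differentiable (by simp)
  set W : ℝ × ℝ → ℝ := fun q => fderiv ℝ V q (0, 1) with hWdef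
  set W1 : ℝ × ℝ → ℝ := fun q => fderiv ℝ V q (1, 0) with hW1def
  have hW : ContDiff ℝ (⊤ : ℕ∞) W := smooth_D hv _
  have hW1 : ContDiff ℝ (⊤ : ℕ∞) W1 := smooth_D hv _
  have hWd : Differentiable ℝ W := hW.differentiable (by simp)
  have hW1d : Differentiable ℝ W1 := hW1.differentiable (by simp)
  -- basic identifications
  have h2 : ∀ x y, px v x y = W1 (x, y) := by
    intro x y
    exact (hasDerivAt_p1 hVd x y).deriv
  have h1 : ∀ x y, py v x y = W (x, y) := by
    intro x y
    exact (hasDerivAt_p2 hVd x y).deriv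
  have h3 : ∀ x y, px (py v) x y = fderiv ℝ W (x, y) (1, 0) := by
    intro x y
    have : (fun x' => py v x' y) = fun x' => W (x', y) := funext fun x' => h1 x' y
    show deriv (fun x' => py v x' y) x = _
    rw [this]
    exact (hasDerivAt_p1 hWd x y).deriv
  have hWzero : ∀ p : ℝ × ℝ, fderiv ℝ W p ((1 : ℝ), (0 : ℝ)) = 0 := by
    intro p
    have := heq p.1 p.2
    rw [h3 p.1 p.2] at this
    simpa using this
  -- third derivative vanishing: ∂x of ∂yy v = 0
  have h6 : ∀ x y, fderiv ℝ (fun q => fderiv ℝ W q (0, 1)) (x, y) (1, 0) = 0 := by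
    intro x y
    rw [fderiv_D hW (0, 1) (x, y) (1, 0), sym_snd hW (x, y) (1, 0) (0, 1),
      ← fderiv_D hW (1, 0) (x, y) (0, 1)]
    have : (fun q => fderiv ℝ W q ((1 : ℝ), (0 : ℝ))) = fun _ => (0 : ℝ) :=
      funext fun q => hWzero q
    rw [this, fderiv_fun_const]
    simp
  -- ∂y of ∂x v = 0 (by symmetry)
  have h4 : ∀ x y, fderiv ℝ W1 (x, y) ((0 : ℝ), (1 : ℝ)) = 0 := by
    intro x y
    rw [fderiv_D hv (1, 0) (x, y) (0, 1), sym_snd hv (x, y) (0, 1) (1, 0),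
      ← fderiv_D hv (0, 1) (x, y) (1, 0)]
    exact hWzero (x, y)
  -- nonvanishing
  have hA0 : ∀ x y, px v x y ≠ 0 := fun x y =>
    left_ne_zero_of_mul (ne_of_gt (hvxy x y))
  have hB0 : ∀ x y, py v x y ≠ 0 := fun x y =>
    right_ne_zero_of_mul (ne_of_gt (hvxy x y))
  have hδ' : ContDiff ℝ (⊤ : ℕ∞) (deriv δ) := by
    have h : ContDiff ℝ (((⊤ : ℕ∞) : WithTop ℕ∞) + 1) δ := by
      rw [show (((⊤ : ℕ∞) : WithTop ℕ∞) + 1) = ((⊤ : ℕ∞) : WithTop ℕ∞) by simp]; exact hδ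
    exact (contDiff_succ_iff_deriv.mp h).2.2
  -- first claim : formula for py u
  have claim1 : ∀ x y, py u x y =
      fderiv ℝ W (x, y) (0, 1) / py v x y + deriv δ (v x y) * py v x y := by
    intro x y
    have hA : HasDerivAt (fun y' => px v x y') 0 y := by
      have h := hasDerivAt_p2 hW1d x y
      rw [h4 x y] at h
      have e : (fun y' => W1 (x, y')) = fun y' => px v x y' := funext fun y' => (h2 x y').symm
      rwa [e] at h
    have hB : HasDerivAt (fun y' => py v x y') (fderiv ℝ W (x, y) (0, 1)) y := by
      have h := hasDerivAt_p2 hWd x y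
      have e : (fun y' => W (x, y')) = fun y' => py v x y' := funext fun y' => (h1 x y').symm
      rwa [e] at h
    have hvy : HasDerivAt (fun y' => v x y') (py v x y) y := by
      rw [h1 x y]
      exact hasDerivAt_p2 hVd x y
    have hP : HasDerivAt (fun y' => px v x y' * py v x y')
        (0 * py v x y + px v x y * fderiv ℝ W (x, y) (0, 1)) y := hA.mul hB
    have hlog := hP.log (ne_of_gt (hvxy x y))
    have hδc : HasDerivAt (fun y' => δ (v x y')) (deriv δ (v x y) * py v x y) y :=
      ((hδ.differentiable (by simp) (v x y)).hasDerivAt).comp y hvy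
    have total := hlog.fun_add hδc
    have e : (fun y' => u x y') =
        fun y' => Real.log (px v x y' * py v x y') + δ (v x y') :=
      funext fun y' => hu x y'
    show deriv (fun y' => u x y') y = _
    rw [e, total.deriv, zero_mul, zero_add,
      mul_div_mul_left _ _ (hA0 x y)]
  -- final computation
  intro x y
  have hC : HasDerivAt (fun x' => fderiv ℝ W (x', y) (0, 1)) 0 x := by
    have h := hasDerivAt_p1 ((smooth_D hW (0, 1)).differentiable (by simp)) x y
    rw [h6 x y] at h
    exact h
  have hBx : HasDerivAt (fun x' => py v x' y) 0 x := by
    have h := hasDerivAt_p1 hWd x y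
    rw [hWzero (x, y)] at h
    have e : (fun x' => W (x', y)) = fun x' => py v x' y := funext fun x' => (h1 x' y).symm
    rwa [e] at h
  have hvx : HasDerivAt (fun x' => v x' y) (px v x y) x := by
    rw [h2 x y]
    exact hasDerivAt_p1 hVd x y
  have hdiv := hC.fun_div hBx (hB0 x y)
  have hδx : HasDerivAt (fun x' => deriv δ (v x' y))
      (deriv (deriv δ) (v x y) * px v x y) x :=
    HasDerivAt.comp (h₂ := deriv δ) x ((hδ'.differentiable (by simp) (v x y)).hasDerivAt) hvx
  have hmul := hδx.fun_mul hBx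
  have total := hdiv.fun_add hmul
  have e : (fun x' => py u x' y) =
      fun x' => fderiv ℝ W (x', y) (0, 1) / py v x' y + deriv δ (v x' y) * py v x' y :=
    funext fun x' => claim1 x' y
  show deriv (fun x' => py u x' y) x = _
  rw [e, total.deriv, hu x y, hode, Real.exp_add, Real.exp_log (hvxy x y)]
  ring
end

section
/- Let c be a real constant, let p : ℝ → ℝ be a smooth function with p'(t) = exp(c·t) for all t, and let μ : ℝ → ℝ be a smooth function. Let v : ℝ² → ℝ be a smooth function of (x,y) satisfying the wave equation v_xy = 0 at every point, and suppose that −p'(v)·v_x / (μ(v_y) + p(v)) > 0 everywhere (in particular μ(v_y) + p(v) ≠ 0). Define u = ln( −p'(v)·v_x / (μ(v_y) + p(v)) ). Then u satisfies u_xy = exp(u)·u_y at every point. -/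
theorem stmt_19 (c : ℝ) (p μ : ℝ → ℝ)
    (hp : ContDiff ℝ (⊤ : ℕ∞) p) (hp' : ∀ t, deriv p t = Real.exp (c * t))
    (hμ : ContDiff ℝ (⊤ : ℕ∞) μ)
    (v u : ℝ → ℝ → ℝ)
    (hv : ContDiff ℝ (⊤ : ℕ∞) (fun q : ℝ × ℝ => v q.1 q.2))
    (heq : ∀ x y, px (py v) x y = 0)
    (hpos : ∀ x y, 0 < -(deriv p (v x y)) * px v x y / (μ (py v x y) + p (v x y)))
    (hu : ∀ x y, u x y =
      Real.log (-(deriv p (v x y)) * px v x y / (μ (py v x y) + p (v x y)))) :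
    ∀ x y, px (py u) x y = Real.exp (u x y) * py u x y := by
  set V : ℝ × ℝ → ℝ := fun q => v q.1 q.2 with hVdef
  have hVd : Differentiable ℝ V := hv.differentiable (by simp)
  have hf' : ContDiff ℝ (⊤ : ℕ∞) (fderiv ℝ V) := hv.fderiv_right (by simp)
  have hf'd : Differentiable ℝ (fderiv ℝ V) := hf'.differentiable (by simp)
  -- first partial derivatives as fderiv applications
  have hx1 : ∀ a b : ℝ, HasDerivAt (fun x' => v x' b) (fderiv ℝ V (a, b) (1, 0)) a := by
    intro a b
    have := (hVd (a, b)).hasFDerivAt.comp_hasDerivAt a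
      ((hasDerivAt_id a).prodMk (hasDerivAt_const a b))
    simpa [Function.comp_def] using this
  have hy1 : ∀ a b : ℝ, HasDerivAt (fun y' => v a y') (fderiv ℝ V (a, b) (0, 1)) b := by
    intro a b
    have := (hVd (a, b)).hasFDerivAt.comp_hasDerivAt b
      ((hasDerivAt_const b a).prodMk (hasDerivAt_id b))
    simpa [Function.comp_def] using this
  have hpx : ∀ a b : ℝ, px v a b = fderiv ℝ V (a, b) (1, 0) := fun a b => (hx1 a b).deriv
  have hpy : ∀ a b : ℝ, py v a b = fderiv ℝ V (a, b) (0, 1) := fun a b => (hy1 a b).deriv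
  -- mixed second partials
  have hyx : ∀ a b : ℝ, HasDerivAt (fun x' => py v x' b)
      (fderiv ℝ (fderiv ℝ V) (a, b) (1, 0) (0, 1)) a := by
    intro a b
    have h1 : HasDerivAt (fun x' => fderiv ℝ V (x', b)) (fderiv ℝ (fderiv ℝ V) (a, b) (1, 0)) a := by
      have := (hf'd (a, b)).hasFDerivAt.comp_hasDerivAt a
        ((hasDerivAt_id a).prodMk (hasDerivAt_const a b))
      simpa [Function.comp_def] using this
    have h2 := h1.clm_apply (hasDerivAt_const a ((0 : ℝ), (1 : ℝ)))
    have h3 : (fun x' => py v x' b) = fun x' => fderiv ℝ V (x', b) (0, 1) :=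
      funext fun x' => hpy x' b
    rw [h3]
    simpa using h2
  have hxy : ∀ a b : ℝ, HasDerivAt (fun y' => px v a y')
      (fderiv ℝ (fderiv ℝ V) (a, b) (0, 1) (1, 0)) b := by
    intro a b
    have h1 : HasDerivAt (fun y' => fderiv ℝ V (a, y')) (fderiv ℝ (fderiv ℝ V) (a, b) (0, 1)) b := by
      have := (hf'd (a, b)).hasFDerivAt.comp_hasDerivAt b
        ((hasDerivAt_const b a).prodMk (hasDerivAt_id b))
      simpa [Function.comp_def] using this
    have h2 := h1.clm_apply (hasDerivAt_const b ((1 : ℝ), (0 : ℝ)))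
    have h3 : (fun y' => px v a y') = fun y' => fderiv ℝ V (a, y') (1, 0) :=
      funext fun y' => hpx a y'
    rw [h3]
    simpa using h2
  have hmix0 : ∀ a b : ℝ, fderiv ℝ (fderiv ℝ V) (a, b) (1, 0) (0, 1) = 0 := by
    intro a b
    rw [← (hyx a b).deriv]
    exact heq a b
  have hmix0' : ∀ a b : ℝ, fderiv ℝ (fderiv ℝ V) (a, b) (0, 1) (1, 0) = 0 := by
    intro a b
    rw [second_derivative_symmetric (fun q => (hVd q).hasFDerivAt) ((hf'd (a, b)).hasFDerivAt)]
    exact hmix0 a b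
  -- v_y depends only on y, v_x only on x
  set W : ℝ → ℝ := fun b => py v 0 b with hWdef
  set G : ℝ → ℝ := fun a => px v a 0 with hGdef
  have hWconst : ∀ a b : ℝ, py v a b = W b := by
    intro a b
    have hdiff : Differentiable ℝ (fun x' => py v x' b) := fun a' => by
      have := hyx a' b; rw [hmix0 a' b] at this; exact this.differentiableAt
    have hzero : ∀ a' : ℝ, deriv (fun x' => py v x' b) a' = 0 := fun a' => by
      rw [(hyx a' b).deriv]; exact hmix0 a' b
    exact is_const_of_deriv_eq_zero hdiff hzero a 0
  have hGconst : ∀ a b : ℝ, px v a b = G a := by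
    intro a b
    have hdiff : Differentiable ℝ (fun y' => px v a y') := fun b' => by
      have := hxy a b'; rw [hmix0' a b'] at this; exact this.differentiableAt
    have hzero : ∀ b' : ℝ, deriv (fun y' => px v a y') b' = 0 := fun b' => by
      rw [(hxy a b').deriv]; exact hmix0' a b'
    exact is_const_of_deriv_eq_zero hdiff hzero b 0
  -- W is differentiable
  have hWeq : W = fun b => fderiv ℝ V (0, b) (0, 1) := funext fun b => hpy 0 b
  have hWdiff : Differentiable ℝ W := by
    rw [hWeq]
    have h1 : ContDiff ℝ (⊤ : ℕ∞) (fun q : ℝ × ℝ => fderiv ℝ V q (0, 1)) := hf'.clm_apply contDiff_const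
    exact (h1.differentiable (by simp)).comp ((differentiable_const 0).prodMk differentiable_id)
  -- positivity facts
  have hposG : ∀ a b : ℝ, 0 < -(Real.exp (c * v a b)) * G a / (μ (W b) + p (v a b)) := by
    intro a b
    have h := hpos a b
    rwa [hp', hGconst a b, hWconst a b] at h
  have hDne : ∀ a b : ℝ, μ (W b) + p (v a b) ≠ 0 := by
    intro a b h0
    have h := hposG a b
    rw [h0, div_zero] at h
    exact lt_irrefl 0 h
  have hGne : ∀ a : ℝ, G a ≠ 0 := by
    intro a h0
    have h := hposG a 0
    rw [h0, mul_zero, zero_div] at h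
    exact lt_irrefl 0 h
  -- derivative of v in each variable with constant-values
  have hvy : ∀ a b : ℝ, HasDerivAt (fun y' => v a y') (W b) b := by
    intro a b
    have h := hy1 a b
    rwa [← hpy a b, hWconst a b] at h
  have hvx : ∀ a b : ℝ, HasDerivAt (fun x' => v x' b) (G a) a := by
    intro a b
    have h := hx1 a b
    rwa [← hpx a b, hGconst a b] at h
  -- key formula for py u
  have key : ∀ a b : ℝ, py u a b =
      c * W b - (deriv μ (W b) * deriv W b + Real.exp (c * v a b) * W b)
        / (μ (W b) + p (v a b)) := by
    intro a b
    have hfun : (fun y' => u a y') = fun y' =>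
        Real.log (-(Real.exp (c * v a y')) * G a / (μ (W y') + p (v a y'))) := by
      funext y'
      rw [hu, hp', hGconst a y', hWconst a y']
    have hE : HasDerivAt (fun y' => Real.exp (c * v a y'))
        (Real.exp (c * v a b) * (c * W b)) b := ((hvy a b).const_mul c).exp
    have hN : HasDerivAt (fun y' => -(Real.exp (c * v a y')) * G a)
        (-(Real.exp (c * v a b) * (c * W b)) * G a) b := hE.neg.mul_const (G a)
    have hW' : HasDerivAt W (deriv W b) b := (hWdiff b).hasDerivAt
    have hμW : HasDerivAt (fun y' => μ (W y')) (deriv μ (W b) * deriv W b) b := by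
      have := ((hμ.differentiable (by simp) (W b)).hasDerivAt).comp b hW'
      simpa [Function.comp_def] using this
    have hpv : HasDerivAt (fun y' => p (v a y')) (Real.exp (c * v a b) * W b) b := by
      have := ((hp.differentiable (by simp) (v a b)).hasDerivAt).comp b (hvy a b)
      rw [hp'] at this
      simpa [Function.comp_def] using this
    have hDD := hμW.add hpv
    have hQ := hN.div hDD (hDne a b)
    have hFne : -(Real.exp (c * v a b)) * G a / (μ (W b) + p (v a b)) ≠ 0 :=
      ne_of_gt (hposG a b)
    have hlog := (Real.hasDerivAt_log hFne).comp b hQ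
    have hres : py u a b = (-(Real.exp (c * v a b)) * G a / (μ (W b) + p (v a b)))⁻¹ *
        ((-(Real.exp (c * v a b) * (c * W b)) * G a * (μ (W b) + p (v a b)) -
          -(Real.exp (c * v a b)) * G a *
            (deriv μ (W b) * deriv W b + Real.exp (c * v a b) * W b)) /
          (μ (W b) + p (v a b)) ^ 2) := by
      show deriv (fun y' => u a y') b = _
      rw [hfun]
      have := hlog.deriv
      simpa [Function.comp_def] using this
    rw [hres]
    have hEne : Real.exp (c * v a b) ≠ 0 := Real.exp_ne_zero _
    field_simp [hDne a b, hGne a]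
    ring
  -- now the main computation
  intro x y
  have hfun2 : (fun x' => py u x' y) = fun x' =>
      c * W y - (deriv μ (W y) * deriv W y + Real.exp (c * v x' y) * W y)
        / (μ (W y) + p (v x' y)) := funext fun x' => key x' y
  have hE2 : HasDerivAt (fun x' => Real.exp (c * v x' y))
      (Real.exp (c * v x y) * (c * G x)) x := ((hvx x y).const_mul c).exp
  have hnum : HasDerivAt (fun x' => deriv μ (W y) * deriv W y + Real.exp (c * v x' y) * W y)
      (Real.exp (c * v x y) * (c * G x) * W y) x := by
    have := (hasDerivAt_const x (deriv μ (W y) * deriv W y)).add (hE2.mul_const (W y))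
    simpa only [zero_add, Pi.add_def] using this
  have hpv2 : HasDerivAt (fun x' => p (v x' y)) (Real.exp (c * v x y) * G x) x := by
    have := ((hp.differentiable (by simp) (v x y)).hasDerivAt).comp x (hvx x y)
    rw [hp'] at this
    simpa [Function.comp_def] using this
  have hden : HasDerivAt (fun x' => μ (W y) + p (v x' y)) (Real.exp (c * v x y) * G x) x := by
    have := (hasDerivAt_const x (μ (W y))).add hpv2
    simpa only [zero_add, Pi.add_def] using this
  have hq := hnum.div hden (hDne x y)
  have htot := (hasDerivAt_const x (c * W y)).sub hq
  have hLHS : px (py u) x y =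
      0 - (Real.exp (c * v x y) * (c * G x) * W y * (μ (W y) + p (v x y)) -
        (deriv μ (W y) * deriv W y + Real.exp (c * v x y) * W y) *
          (Real.exp (c * v x y) * G x)) / (μ (W y) + p (v x y)) ^ 2 := by
    show deriv (fun x' => py u x' y) x = _
    rw [hfun2]
    exact htot.deriv
  have hexp : Real.exp (u x y) = -(Real.exp (c * v x y)) * G x / (μ (W y) + p (v x y)) := by
    rw [hu, hp', hGconst x y, hWconst x y]
    exact Real.exp_log (hposG x y)
  rw [hLHS, hexp, key x y]
  field_simp [hDne x y]
  ring
end
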